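/- arXiv:2603.11060 — 9 statements merged into one kernel-verified Lean document; each statement's English description precedes it below -/
import Mathlib

section
/- Let G be a finite simple graph, let {x,y} be an edge with D_x ≥ 1 and D_y ≥ 1, and let α ∈ [0,1). Then every coupling π of the α-lazy measures m_x^α and m_y^α has transport cost ∑_{(u,v)} π(u,v)·d(u,v) ≥ α + (1−α)·(D_x − 2 − D_{xy})/D_x. Equivalently, 1 − W_1(m_x^α, m_y^α) ≤ (1−α)·(D_{xy}+2)/D_x, where W_1 denotes the minimal transport cost over couplings. -/
/-!
Test the coupling against `f = d(·, y)`, which is `1`-Lipschitz from any vertex to the support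
`{y} ∪ Γ(y)` of `m_y^α`, so `cost π ≥ ∑ m_x^α f - ∑ m_y^α f`. The right side is computed exactly:
`f` is `0` at `y`, `1` at `x` and on `Γ(x) ∩ Γ(y)`, and `2` on the remaining neighbours of `x`.
-/

open Finset

namespace CurvGraph

variable {V : Type*} [Fintype V] [DecidableEq V]

/-- The `α`-lazy neighbour measure at `x`: mass `α` at `x` and `(1-α)/D_x` at each neighbour. -/
noncomputable def lazy (G : SimpleGraph V) [DecidableRel G.Adj] (α : ℝ) (x : V) : V → ℝ :=
  fun v => if v = x then α else if G.Adj x v then (1 - α) / (G.degree x : ℝ) else 0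

/-- `π` is a coupling of the measures `m1` and `m2` on `V`. -/
def IsCoupling (π : V × V → ℝ) (m1 m2 : V → ℝ) : Prop :=
  (∀ p, 0 ≤ π p) ∧ (∀ u, ∑ v, π (u, v) = m1 u) ∧ (∀ v, ∑ u, π (u, v) = m2 v)

/-- Transport cost of `π` with respect to the graph distance of `G`. -/
noncomputable def cost (G : SimpleGraph V) (π : V × V → ℝ) : ℝ :=
  ∑ p : V × V, π p * (G.dist p.1 p.2 : ℝ)

section Coupling

variable {π : V × V → ℝ} {m1 m2 : V → ℝ}

omit [DecidableEq V] in
theorem IsCoupling.sum_mul_sub (hπ : IsCoupling π m1 m2) (f g : V → ℝ) :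
    ∑ p, π p * (f p.1 - g p.2) = ∑ u, m1 u * f u - ∑ v, m2 v * g v := by
  simp only [mul_sub, sum_sub_distrib]
  congr 1
  · rw [Fintype.sum_prod_type]
    exact sum_congr rfl fun u _ => by rw [← hπ.2.1 u, sum_mul]
  · rw [Fintype.sum_prod_type_right]
    exact sum_congr rfl fun v _ => by rw [← hπ.2.2 v, sum_mul]

omit [DecidableEq V] in
theorem IsCoupling.eq_zero_of_right_eq_zero (hπ : IsCoupling π m1 m2) {v : V} (hv : m2 v = 0)
    (u : V) : π (u, v) = 0 := by
  have hle : π (u, v) ≤ m2 v := by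
    rw [← hπ.2.2 v]
    exact single_le_sum (fun w _ => hπ.1 (w, v)) (mem_univ u)
  exact le_antisymm (hv ▸ hle) (hπ.1 _)

omit [DecidableEq V] in
/-- Weak Kantorovich duality. -/
theorem IsCoupling.sum_sub_le_cost (hπ : IsCoupling π m1 m2) (G : SimpleGraph V) (f : V → ℝ)
    (hf : ∀ u v, m2 v ≠ 0 → f u - f v ≤ G.dist u v) :
    ∑ u, m1 u * f u - ∑ v, m2 v * f v ≤ cost G π := by
  rw [← hπ.sum_mul_sub]
  refine sum_le_sum fun ⟨u, v⟩ _ => ?_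
  by_cases hv : m2 v = 0
  · simp [hπ.eq_zero_of_right_eq_zero hv]
  · exact mul_le_mul_of_nonneg_left (hf u v hv) (hπ.1 _)

end Coupling

omit [Fintype V] [DecidableEq V] in
theorem dist_eq_two_of_adj_of_adj {G : SimpleGraph V} {u v w : V} (hne : u ≠ w)
    (hnadj : ¬G.Adj u w) (huv : G.Adj u v) (hvw : G.Adj v w) : G.dist u w = 2 := by
  rw [SimpleGraph.dist, SimpleGraph.edist_eq_two_iff.mpr
    ⟨hne, hnadj, ⟨v, (G.mem_commonNeighbors).mpr ⟨huv, hvw.symm⟩⟩⟩]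
  rfl

section Graph

variable (G : SimpleGraph V) [DecidableRel G.Adj]

theorem sum_lazy_mul (α : ℝ) (x : V) (f : V → ℝ) :
    ∑ v, lazy G α x v * f v
      = α * f x + (1 - α) / (G.degree x : ℝ) * ∑ v ∈ G.neighborFinset x, f v := by
  have hsplit : ∀ v, lazy G α x v * f v
      = (if v = x then α * f x else 0)
        + (if G.Adj x v then (1 - α) / (G.degree x : ℝ) * f v else 0) := by
    intro v
    by_cases hv : v = x
    · subst hv; simp [lazy]
    · by_cases hadj : G.Adj x v <;> simp [lazy, hv, hadj]
  simp only [hsplit, sum_add_distrib, sum_ite_eq', mem_univ, if_true, ← sum_filter, mul_sum,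
    G.neighborFinset_eq_filter]

variable {G}

theorem reachable_of_lazy_ne_zero {α : ℝ} {x v : V} (h : lazy G α x v ≠ 0) :
    G.Reachable v x := by
  by_cases hv : v = x
  · exact hv ▸ SimpleGraph.Reachable.refl v
  by_cases hadj : G.Adj x v
  · exact hadj.symm.reachable
  · simp [lazy, hv, hadj] at h

theorem dist_eq_of_adj_of_adj {x u y : V} (hu : G.Adj x u) (hy : G.Adj x y) :
    (G.dist u y : ℝ)
      = 2 - 2 * (if u = y then 1 else 0) - (if u ∈ G.neighborFinset y then 1 else 0) := by
  by_cases huy : u = y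
  · subst huy; simp
  by_cases hadj : G.Adj u y
  · simp [huy, hadj.symm, SimpleGraph.dist_eq_one_iff_adj.mpr hadj]
    norm_num
  · have hy' : ¬G.Adj y u := fun h => hadj h.symm
    simp [huy, hy', dist_eq_two_of_adj_of_adj huy hadj hu.symm hy]

theorem sum_neighborFinset_dist_of_adj {x y : V} (hxy : G.Adj x y) :
    ∑ u ∈ G.neighborFinset x, (G.dist u y : ℝ)
      = 2 * G.degree x - 2 - (G.neighborFinset x ∩ G.neighborFinset y).card := by
  rw [sum_congr rfl fun u hu => dist_eq_of_adj_of_adj ((G.mem_neighborFinset x u).mp hu) hxy]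
  simp only [sum_sub_distrib, sum_const, ← mul_sum, sum_ite_eq',
    (G.mem_neighborFinset x y).mpr hxy, if_true, sum_boole, filter_mem_eq_inter,
    G.card_neighborFinset_eq_degree, nsmul_eq_mul]
  ring

omit [DecidableEq V] in
theorem sum_neighborFinset_dist_self (y : V) :
    ∑ v ∈ G.neighborFinset y, (G.dist v y : ℝ) = G.degree y := by
  rw [sum_congr rfl fun v hv => by
    rw [SimpleGraph.dist_eq_one_iff_adj.mpr ((G.mem_neighborFinset y v).mp hv).symm]]
  simp [G.card_neighborFinset_eq_degree]

end Graph

theorem coupling_cost_lower_bound_general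
    (G : SimpleGraph V) [DecidableRel G.Adj] (x y : V) (hxy : G.Adj x y)
    (hDx : 1 ≤ G.degree x) (hDy : 1 ≤ G.degree y)
    (α : ℝ)
    (π : V × V → ℝ) (hπ : IsCoupling π (lazy G α x) (lazy G α y)) :
    α + (1 - α) *
        (((G.degree x : ℝ) - 2 - ((G.neighborFinset x ∩ G.neighborFinset y).card : ℝ))
          / (G.degree x : ℝ))
      ≤ cost G π := by
  have hDx0 : (G.degree x : ℝ) ≠ 0 := by positivity
  have hDy0 : (G.degree y : ℝ) ≠ 0 := by positivity
  have hdist_le : ∀ u v, lazy G α y v ≠ 0 →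
      (G.dist u y : ℝ) - G.dist v y ≤ G.dist u v := fun u v hv => by
    have := (reachable_of_lazy_ne_zero hv).dist_triangle_right u
    rw [sub_le_iff_le_add]
    exact_mod_cast this
  calc _ = ∑ u, lazy G α x u * G.dist u y - ∑ v, lazy G α y v * G.dist v y := by
        rw [sum_lazy_mul, sum_lazy_mul, sum_neighborFinset_dist_of_adj hxy,
          sum_neighborFinset_dist_self, SimpleGraph.dist_self,
          SimpleGraph.dist_eq_one_iff_adj.mpr hxy]
        field_simp
        ring
    _ ≤ cost G π := hπ.sum_sub_le_cost G _ hdist_le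

/-- Deterministic Kantorovich–Rubinstein upper bound for curvature.
For an edge `{x,y}` and `α ∈ [0,1)`, every coupling of the lazy measures `m_x^α, m_y^α`
has transport cost at least `α + (1-α)·(D_x - 2 - D_{xy})/D_x`. -/
theorem coupling_cost_lower_bound
    (G : SimpleGraph V) [DecidableRel G.Adj] (x y : V) (hxy : G.Adj x y)
    (hDx : 1 ≤ G.degree x) (hDy : 1 ≤ G.degree y)
    (α : ℝ) (hα0 : 0 ≤ α) (hα1 : α < 1)
    (π : V × V → ℝ) (hπ : IsCoupling π (lazy G α x) (lazy G α y)) :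
    α + (1 - α) *
        (((G.degree x : ℝ) - 2 - ((G.neighborFinset x ∩ G.neighborFinset y).card : ℝ))
          / (G.degree x : ℝ))
      ≤ cost G π :=
  coupling_cost_lower_bound_general G x y hxy hDx hDy α π hπ

end CurvGraph
end

section
/- Let G be a finite simple graph and {x,y} an edge with 1 ≤ D_x ≤ D_y. Define the exclusive neighborhoods U_x = Γ(x) \ (Γ(y) ∪ {y}) and U_y = Γ(y) \ (Γ(x) ∪ {x}), and let φ : U_x → U_y be an injection. Then for every α ∈ [1/2, 1), writing β = 1−α, there exists a coupling π of m_x^α and m_y^α whose transport cost is at most (α − β/D_y) + (β/D_y)·∑_{u ∈ U_x} d(u, φ(u)) + 3β·(1 − D_x/D_y). -/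
/-!
Write `β = 1 - α`. The vertex `x` keeps `β / D_y` in place and sends `α - β / D_x` (nonnegative
because `α ≥ 1/2`) along the edge to `y`, which keeps `β / D_x`; common neighbours keep `β / D_y`,
and each `u ∈ U_x` sends `β / D_y` to `φ u`. What is left, `β / D_x - β / D_y` at each of the
`D_x` points of `{x} ∪ Γ(x) \ {y}`, is spread uniformly over the `D_y - D_x` points of
`U_y \ φ(U_x)`, all within distance 3.
-/

open Finset

namespace CurvGraph

variable {V : Type*} [Fintype V] [DecidableEq V]

theorem _root_.SimpleGraph.dist_le_three {W : Type*} {G : SimpleGraph W} {u x y v : W}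
    (hu : u = x ∨ G.Adj u x) (hxy : G.Adj x y) (hv : G.Adj y v) : G.dist u v ≤ 3 := by
  rcases hu with rfl | hux
  · exact (SimpleGraph.dist_le (.cons hxy (.cons hv .nil))).trans (by simp)
  · exact SimpleGraph.dist_le (.cons hux (.cons hxy (.cons hv .nil)))

omit [DecidableEq V] in
theorem IsCoupling.add {π π' : V × V → ℝ} {m₁ m₂ m₁' m₂' : V → ℝ}
    (h : IsCoupling π m₁ m₂) (h' : IsCoupling π' m₁' m₂') :
    IsCoupling (π + π') (m₁ + m₁') (m₂ + m₂') :=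
  ⟨fun p => add_nonneg (h.1 p) (h'.1 p),
    fun u => by simp [sum_add_distrib, h.2.1, h'.2.1],
    fun v => by simp [sum_add_distrib, h.2.2, h'.2.2]⟩

omit [DecidableEq V] in
theorem cost_add (G : SimpleGraph V) (π π' : V × V → ℝ) :
    cost G (π + π') = cost G π + cost G π' := by
  simp [cost, add_mul, sum_add_distrib]

def graphPlan (s : Finset V) (f : V → V) (w : ℝ) : V × V → ℝ :=
  fun p => if p.1 ∈ s ∧ p.2 = f p.1 then w else 0

def blockPlan (s t : Finset V) (w : ℝ) : V × V → ℝ :=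
  fun p => if p.1 ∈ s ∧ p.2 ∈ t then w else 0

theorem isCoupling_graphPlan {s : Finset V} {f : V → V} {w : ℝ} (hw : 0 ≤ w)
    (hf : Set.InjOn f s) :
    IsCoupling (graphPlan s f w) (fun u => if u ∈ s then w else 0)
      (fun v => if v ∈ s.image f then w else 0) := by
  refine ⟨fun p => by unfold graphPlan; split_ifs <;> simp [hw], fun u => ?_, fun v => ?_⟩
  · by_cases hu : u ∈ s <;> simp [graphPlan, hu]
  · simp only [graphPlan]
    split_ifs with hv
    · obtain ⟨u₀, hu₀, rfl⟩ := mem_image.mp hv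
      rw [Fintype.sum_eq_single u₀ fun u hu =>
        if_neg fun ⟨hus, hfu⟩ => hu (hf hus hu₀ hfu.symm)]
      simp [hu₀]
    · exact sum_eq_zero fun u _ =>
        if_neg fun ⟨hus, hfu⟩ => hv (mem_image.mpr ⟨u, hus, hfu.symm⟩)

theorem cost_graphPlan (G : SimpleGraph V) (s : Finset V) (f : V → V) (w : ℝ) :
    cost G (graphPlan s f w) = w * ∑ u ∈ s, (G.dist u (f u) : ℝ) := by
  simp [cost, graphPlan, Fintype.sum_prod_type, ite_and, mul_sum, sum_ite_mem]

theorem isCoupling_blockPlan {s t : Finset V} {w : ℝ} (hw : 0 ≤ w) :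
    IsCoupling (blockPlan s t w) (fun u => if u ∈ s then #t * w else 0)
      (fun v => if v ∈ t then #s * w else 0) := by
  refine ⟨fun p => by unfold blockPlan; split_ifs <;> simp [hw], fun u => ?_, fun v => ?_⟩
  · by_cases hu : u ∈ s <;> simp [blockPlan, hu]
  · by_cases hv : v ∈ t <;> simp [blockPlan, hv]

theorem cost_blockPlan_le (G : SimpleGraph V) {s t : Finset V} {w D : ℝ} (hw : 0 ≤ w)
    (hD : ∀ u ∈ s, ∀ v ∈ t, (G.dist u v : ℝ) ≤ D) :
    cost G (blockPlan s t w) ≤ #s * #t * w * D := by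
  calc cost G (blockPlan s t w) = ∑ u ∈ s, ∑ v ∈ t, w * (G.dist u v : ℝ) := by
        simp [cost, blockPlan, Fintype.sum_prod_type, ite_and, sum_ite_mem]
    _ ≤ ∑ u ∈ s, ∑ v ∈ t, w * D :=
        sum_le_sum fun u hu => sum_le_sum fun v hv => mul_le_mul_of_nonneg_left (hD u hu v hv) hw
    _ = #s * #t * w * D := by simp; ring

section InjectionCoupling

variable (G : SimpleGraph V) [DecidableRel G.Adj]

def exclusiveNeighborFinset (x y : V) : Finset V :=
  G.neighborFinset x \ insert y (G.neighborFinset y)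

variable {G} {x y : V}

@[simp]
theorem mem_exclusiveNeighborFinset {u : V} :
    u ∈ exclusiveNeighborFinset G x y ↔ G.Adj x u ∧ u ≠ y ∧ ¬G.Adj y u := by
  simp [exclusiveNeighborFinset]

theorem card_exclusiveNeighborFinset_add (hxy : G.Adj x y) :
    #(exclusiveNeighborFinset G x y) + #(G.neighborFinset x ∩ G.neighborFinset y) + 1 =
      G.degree x := by
  have hy : y ∉ G.neighborFinset x ∩ G.neighborFinset y := by simp
  rw [add_assoc, ← card_insert_of_notMem hy, ← inter_insert_of_mem (by simpa using hxy),
    exclusiveNeighborFinset, card_sdiff_add_card_inter, G.card_neighborFinset_eq_degree]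

theorem card_exclusiveNeighborFinset_sdiff_image {φ : V → V} (hxy : G.Adj x y)
    (hmap : ∀ u ∈ exclusiveNeighborFinset G x y, φ u ∈ exclusiveNeighborFinset G y x)
    (hinj : Set.InjOn φ (exclusiveNeighborFinset G x y)) :
    (#(exclusiveNeighborFinset G y x \ (exclusiveNeighborFinset G x y).image φ) : ℝ) =
      G.degree y - G.degree x := by
  have hcard := card_sdiff_add_card_eq_card (image_subset_iff.mpr hmap)
  rw [card_image_of_injOn hinj] at hcard
  have hy := card_exclusiveNeighborFinset_add hxy.symm
  rw [inter_comm] at hy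
  rw [← card_exclusiveNeighborFinset_add hxy, ← hy, ← hcard]
  push_cast
  ring

theorem card_insert_erase_neighborFinset (hxy : G.Adj x y) :
    #(insert x ((G.neighborFinset x).erase y)) = G.degree x := by
  rw [card_insert_of_notMem (by simp), card_erase_of_mem (by simpa using hxy),
    G.card_neighborFinset_eq_degree, Nat.sub_add_cancel hxy.degree_pos_left]

variable (G x y) in
noncomputable def injectionCoupling (φ : V → V) (α : ℝ) : V × V → ℝ :=
  graphPlan (insert x (G.neighborFinset x ∩ G.neighborFinset y)) id ((1 - α) / G.degree y)
  + graphPlan {x} (fun _ => y) (α - (1 - α) / G.degree x)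
  + graphPlan {y} id ((1 - α) / G.degree x)
  + graphPlan (exclusiveNeighborFinset G x y) φ ((1 - α) / G.degree y)
  + blockPlan (insert x ((G.neighborFinset x).erase y))
      (exclusiveNeighborFinset G y x \ (exclusiveNeighborFinset G x y).image φ)
      ((1 - α) / (G.degree x * G.degree y))

theorem isCoupling_injectionCoupling {φ : V → V} {α : ℝ} (hxy : G.Adj x y)
    (hmap : ∀ u ∈ exclusiveNeighborFinset G x y, φ u ∈ exclusiveNeighborFinset G y x)
    (hinj : Set.InjOn φ (exclusiveNeighborFinset G x y)) (hα₀ : 1 / 2 ≤ α)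
    (hα₁ : α ≤ 1) :
    IsCoupling (injectionCoupling G x y φ α) (lazy G α x) (lazy G α y) := by
  have hβ : 0 ≤ 1 - α := by linarith
  have hdx : (1 : ℝ) ≤ G.degree x := by exact_mod_cast hxy.degree_pos_left
  have hdy : (G.degree y : ℝ) ≠ 0 := by exact_mod_cast hxy.degree_pos_right.ne'
  have h : IsCoupling (injectionCoupling G x y φ α) _ _ :=
    ((((isCoupling_graphPlan (div_nonneg hβ (Nat.cast_nonneg _)) (Set.injOn_id _)).add
      (isCoupling_graphPlan (by linarith [div_le_self hβ hdx])
        (by rw [coe_singleton]; exact Set.injOn_singleton _ _))).add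
      (isCoupling_graphPlan (div_nonneg hβ (Nat.cast_nonneg _)) (Set.injOn_id _))).add
      (isCoupling_graphPlan (div_nonneg hβ (Nat.cast_nonneg _)) hinj)).add
      (isCoupling_blockPlan (div_nonneg hβ (by positivity)))
  convert h using 1 <;> funext u <;> clear h <;> simp only [lazy, Pi.add_apply]
  · rw [card_exclusiveNeighborFinset_sdiff_image hxy hmap hinj,
      show ((G.degree y : ℝ) - G.degree x) * ((1 - α) / (G.degree x * G.degree y)) =
        (1 - α) / G.degree x - (1 - α) / G.degree y by field_simp]
    by_cases hux : u = x
    · simp [hux, hxy.ne]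
      ring
    by_cases huy : u = y
    · simp [huy, hxy.ne', hxy]
    by_cases hxu : G.Adj x u
    · by_cases hyu : G.Adj y u <;> simp [*]
    · simp [*]
  · rw [card_insert_erase_neighborFinset hxy,
      show (G.degree x : ℝ) * ((1 - α) / (G.degree x * G.degree y)) = (1 - α) / G.degree y by
        field_simp]
    by_cases huφ : u ∈ (exclusiveNeighborFinset G x y).image φ
    · have hu := mem_exclusiveNeighborFinset.mp (image_subset_iff.mpr hmap huφ)
      simp [hu, hu.1.ne', huφ]
    simp only [huφ, if_false, add_zero]
    by_cases hux : u = x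
    · simp [hux, hxy.ne, hxy.symm]
    by_cases huy : u = y
    · simp [huy, hxy.ne']
    by_cases hyu : G.Adj y u
    · by_cases hxu : G.Adj x u <;> simp [*]
    · simp [*]

theorem cost_injectionCoupling_le {φ : V → V} {α : ℝ} (hxy : G.Adj x y)
    (hmap : ∀ u ∈ exclusiveNeighborFinset G x y, φ u ∈ exclusiveNeighborFinset G y x)
    (hinj : Set.InjOn φ (exclusiveNeighborFinset G x y)) (hα₁ : α ≤ 1) :
    cost G (injectionCoupling G x y φ α) ≤
      (α - (1 - α) / G.degree y)
      + (1 - α) / G.degree y * ∑ u ∈ exclusiveNeighborFinset G x y, (G.dist u (φ u) : ℝ)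
      + 3 * (1 - α) * (1 - G.degree x / G.degree y) := by
  have hβ : 0 ≤ 1 - α := by linarith
  have hdx : (0 : ℝ) < G.degree x := by exact_mod_cast hxy.degree_pos_left
  have hW := card_exclusiveNeighborFinset_sdiff_image hxy hmap hinj
  have hdy : (G.degree y : ℝ) ≠ 0 := by exact_mod_cast hxy.degree_pos_right.ne'
  have hdxy : (G.degree x : ℝ) ≤ G.degree y := by rw [← sub_nonneg, ← hW]; positivity
  have hblock := cost_blockPlan_le G (D := 3) (w := (1 - α) / (G.degree x * G.degree y))
    (s := insert x ((G.neighborFinset x).erase y))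
    (t := exclusiveNeighborFinset G y x \ (exclusiveNeighborFinset G x y).image φ)
    (div_nonneg hβ (by positivity)) fun u hu v hv => by
      have hux : u = x ∨ G.Adj u x :=
        (by simpa using hu : u = x ∨ u ≠ y ∧ G.Adj x u).imp_right fun h => h.2.symm
      exact_mod_cast SimpleGraph.dist_le_three hux hxy
        (mem_exclusiveNeighborFinset.mp (mem_sdiff.mp hv).1).1
  rw [card_insert_erase_neighborFinset hxy, hW,
    show (G.degree x : ℝ) * (G.degree y - G.degree x) * ((1 - α) / (G.degree x * G.degree y)) * 3
      = 3 * (1 - α) * (1 - G.degree x / G.degree y) by field_simp] at hblock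
  have hedge : (G.dist x y : ℝ) = 1 := by simp [SimpleGraph.dist_eq_one_iff_adj.mpr hxy]
  have hmono : (1 - α) / G.degree y ≤ (1 - α) / G.degree x :=
    div_le_div_of_nonneg_left hβ hdx hdxy
  simp only [injectionCoupling, cost_add, cost_graphPlan, id, SimpleGraph.dist_self, Nat.cast_zero,
    sum_const_zero, mul_zero, sum_singleton, hedge, zero_add, add_zero]
  linarith

end InjectionCoupling

theorem coupling_from_injection_general
    (G : SimpleGraph V) [DecidableRel G.Adj] (x y : V) (hxy : G.Adj x y)
    (φ : V → V)
    (hmap : ∀ u ∈ G.neighborFinset x \ (insert y (G.neighborFinset y)),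
        φ u ∈ G.neighborFinset y \ (insert x (G.neighborFinset x)))
    (hinj : Set.InjOn φ ↑(G.neighborFinset x \ (insert y (G.neighborFinset y))))
    (α : ℝ) (hα2 : 1/2 ≤ α) (hα1 : α < 1) :
    ∃ π : V × V → ℝ, IsCoupling π (lazy G α x) (lazy G α y) ∧
      cost G π ≤
        (α - (1 - α) / (G.degree y : ℝ))
        + ((1 - α) / (G.degree y : ℝ)) *
            ∑ u ∈ G.neighborFinset x \ (insert y (G.neighborFinset y)),
              (G.dist u (φ u) : ℝ)
        + 3 * (1 - α) * (1 - (G.degree x : ℝ) / (G.degree y : ℝ)) :=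
  ⟨injectionCoupling G x y φ α, isCoupling_injectionCoupling hxy hmap hinj hα2 hα1.le,
    cost_injectionCoupling_le hxy hmap hinj hα1.le⟩

/-- Coupling upper bound from an injection between exclusive neighbourhoods.
Given an edge `{x,y}` with `1 ≤ D_x ≤ D_y` and an injection `φ` from
`U_x = Γ(x) \ (Γ(y) ∪ {y})` into `U_y = Γ(y) \ (Γ(x) ∪ {x})`, for every `α ∈ [1/2, 1)`
(with `β = 1-α`) there is a coupling of `m_x^α` and `m_y^α` with transport cost at most
`(α − β/D_y) + (β/D_y)·∑_{u ∈ U_x} d(u, φ(u)) + 3β·(1 − D_x/D_y)`. -/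
theorem coupling_from_injection
    (G : SimpleGraph V) [DecidableRel G.Adj] (x y : V) (hxy : G.Adj x y)
    (hDx : 1 ≤ G.degree x) (hord : G.degree x ≤ G.degree y)
    (φ : V → V)
    (hmap : ∀ u ∈ G.neighborFinset x \ (insert y (G.neighborFinset y)),
        φ u ∈ G.neighborFinset y \ (insert x (G.neighborFinset x)))
    (hinj : Set.InjOn φ ↑(G.neighborFinset x \ (insert y (G.neighborFinset y))))
    (α : ℝ) (hα2 : 1/2 ≤ α) (hα1 : α < 1) :
    ∃ π : V × V → ℝ, IsCoupling π (lazy G α x) (lazy G α y) ∧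
      cost G π ≤
        (α - (1 - α) / (G.degree y : ℝ))
        + ((1 - α) / (G.degree y : ℝ)) *
            ∑ u ∈ G.neighborFinset x \ (insert y (G.neighborFinset y)),
              (G.dist u (φ u) : ℝ)
        + 3 * (1 - α) * (1 - (G.degree x : ℝ) / (G.degree y : ℝ)) :=
  coupling_from_injection_general G x y hxy φ hmap hinj α hα2 hα1

end CurvGraph
end

section
/- Fix Λ ≥ 1 and q > 0. There exist a constant C = C(Λ, q) > 0 and an integer M such that for all m ≥ M the following holds. Let L and R be disjoint finite sets with |L| = m and m ≤ |R| = ℓ ≤ Λ·m, and let H be the random bipartite graph on L ∪ R in which each of the m·ℓ pairs (u,v) ∈ L×R is an edge independently with probability p ∈ (0,1]. If p·ℓ ≥ C·log m, then with probability at least 1 − m^{−q}, H contains a matching saturating L, i.e. an injection φ : L → R such that {u, φ(u)} is an edge of H for every u ∈ L. -/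
/-!
If no matching saturates `L`, Hall's theorem gives `S ⊆ L` and `T ⊆ R` with `|T| = |S| - 1` such
that no edge joins `S` to `R \ T`. A union bound over the sizes `s = |S|` bounds the failure
probability by `∑ₛ C(m, s) C(ℓ, s - 1) (1 - p) ^ (s (ℓ - s + 1))`, and once `p ℓ ≥ (2q + 10) log m`
each term is at most `m ^ (-(q + 1))`: with `k = min s (ℓ - s + 1)` the binomials are at most
`ℓ ^ (2k) ≤ m ^ (4k)`, while `s (ℓ - s + 1) ≥ k ℓ / 2`.
-/

open MeasureTheory Real

namespace BipMatch

/-- Bernoulli measure on `Bool` with success probability `p` (clamped to `[0,1]`). -/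
noncomputable def bern (p : ℝ) : Measure Bool :=
  (PMF.bernoulli (min (Real.toNNReal p) 1) (min_le_right _ _)).toMeasure

instance (p : ℝ) : IsProbabilityMeasure (bern p) := PMF.toMeasure.isProbabilityMeasure _

/-- The law of the random bipartite graph on parts `Fin m` and `Fin l`: each of the `m·l`
pairs is an edge independently with probability `p`. -/
noncomputable def bipartite (m l : ℕ) (p : ℝ) : Measure (Fin m × Fin l → Bool) :=
  Measure.pi (fun _ => bern p)

open Finset

lemma bern_singleton_false {p : ℝ} (hp0 : 0 ≤ p) (hp1 : p ≤ 1) :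
    bern p {false} = ENNReal.ofReal (1 - p) := by
  rw [bern, PMF.toMeasure_apply_singleton _ _ (measurableSet_singleton _), PMF.bernoulli_apply,
    min_eq_left (Real.toNNReal_le_one.mpr hp1), Bool.cond_false, ENNReal.ofReal_sub _ hp0,
    ENNReal.ofReal_one, ENNReal.coe_sub, ENNReal.coe_one, ENNReal.ofReal]

lemma pi_bern_forall_false {ι : Type*} [Fintype ι] {p : ℝ} (hp0 : 0 ≤ p) (hp1 : p ≤ 1)
    (A : Finset ι) :
    Measure.pi (fun _ : ι => bern p) {ω | ∀ i ∈ A, ω i = false} =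
      ENNReal.ofReal ((1 - p) ^ #A) := by
  change Measure.pi _ ((A : Set ι).pi fun _ => {false}) = _
  rw [Measure.pi_pi_finset, prod_const, bern_singleton_false hp0 hp1,
    ENNReal.ofReal_pow (by linarith)]

section Matching

variable {α β : Type*} [Fintype α] [Fintype β]

def HasLeftMatching (ω : α × β → Bool) : Prop :=
  ∃ φ : α → β, Function.Injective φ ∧ ∀ u, ω (u, φ u) = true

-- Hall's obstruction `|N(S)| < |S|`, with `S` shrunk to size `|N(S)| + 1` and `T = N(S)`.
lemma exists_card_eq_succ_forall_false_of_not_hasLeftMatching [DecidableEq β]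
    {ω : α × β → Bool} (h : ¬ HasLeftMatching ω) :
    ∃ S : Finset α, ∃ T : Finset β, #S = #T + 1 ∧ ∀ u ∈ S, ∀ v ∉ T, ω (u, v) = false := by
  let N : α → Finset β := fun u => {v | ω (u, v) = true}
  obtain ⟨S, hS⟩ : ∃ S : Finset α, #(S.biUnion N) < #S := by
    by_contra! hall
    obtain ⟨φ, hφ, hφN⟩ := (all_card_le_biUnion_card_iff_exists_injective N).mp hall
    exact h ⟨φ, hφ, fun u => by simpa [N] using hφN u⟩
  obtain ⟨S', hS'S, hS'⟩ := exists_subset_card_eq (show #(S.biUnion N) + 1 ≤ #S by omega)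
  refine ⟨S', S.biUnion N, hS', fun u hu v hv => ?_⟩
  simpa [N] using fun huv : ω (u, v) = true => hv (mem_biUnion.mpr ⟨u, hS'S hu, by simpa [N]⟩)

lemma measure_not_hasLeftMatching_le {p : ℝ} (hp0 : 0 ≤ p) (hp1 : p ≤ 1) :
    Measure.pi (fun _ : α × β => bern p) {ω | ¬ HasLeftMatching ω} ≤
      ENNReal.ofReal (∑ s ∈ Icc 1 (Fintype.card α),
        (Fintype.card α).choose s * (Fintype.card β).choose (s - 1) *
          (1 - p) ^ (s * (Fintype.card β - (s - 1)))) := by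
  classical
  set μ := Measure.pi (fun _ : α × β => bern p)
  have hcover : {ω | ¬ HasLeftMatching ω} ⊆
      ⋃ s ∈ Icc 1 (Fintype.card α), ⋃ S ∈ powersetCard s (univ : Finset α),
        ⋃ T ∈ powersetCard (s - 1) (univ : Finset β),
          {ω : α × β → Bool | ∀ i ∈ S ×ˢ Tᶜ, ω i = false} := by
    intro ω hω
    obtain ⟨S, T, hST, hfalse⟩ := exists_card_eq_succ_forall_false_of_not_hasLeftMatching hω
    simp only [Set.mem_iUnion, Set.mem_ofPred_eq, mem_Icc, mem_powersetCard_univ, exists_prop]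
    exact ⟨#S, ⟨by omega, card_le_univ S⟩, S, rfl, T, by omega,
      fun ⟨u, v⟩ huv => hfalse u (mem_product.mp huv).1 v (by simpa using (mem_product.mp huv).2)⟩
  have hterm : ∀ s ∈ Icc 1 (Fintype.card α), ∀ S ∈ powersetCard s (univ : Finset α),
      ∀ T ∈ powersetCard (s - 1) (univ : Finset β),
        μ {ω | ∀ i ∈ S ×ˢ Tᶜ, ω i = false} =
          ENNReal.ofReal ((1 - p) ^ (s * (Fintype.card β - (s - 1)))) := by
    intro s _ S hS T hT
    rw [pi_bern_forall_false hp0 hp1, card_product, card_compl,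
      (mem_powersetCard_univ.mp hS), (mem_powersetCard_univ.mp hT)]
  calc μ {ω | ¬ HasLeftMatching ω}
      ≤ ∑ s ∈ Icc 1 (Fintype.card α), ∑ S ∈ powersetCard s (univ : Finset α),
          ∑ T ∈ powersetCard (s - 1) (univ : Finset β),
            μ {ω | ∀ i ∈ S ×ˢ Tᶜ, ω i = false} :=
        (measure_mono hcover).trans <| (measure_biUnion_finset_le _ _).trans <|
          sum_le_sum fun s _ => (measure_biUnion_finset_le _ _).trans <|
            sum_le_sum fun S _ => measure_biUnion_finset_le _ _
    _ = _ := by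
      rw [ENNReal.ofReal_sum_of_nonneg fun s _ =>
        mul_nonneg (by positivity) (pow_nonneg (sub_nonneg.mpr hp1) _)]
      refine sum_congr rfl fun s hs => ?_
      rw [sum_congr rfl fun S hS => sum_congr rfl (hterm s hs S hS)]
      simp only [sum_const, card_powersetCard, card_univ, nsmul_eq_mul]
      rw [ENNReal.ofReal_mul (by positivity), ENNReal.ofReal_mul (by positivity), mul_assoc,
        ENNReal.ofReal_natCast, ENNReal.ofReal_natCast]

end Matching

lemma _root_.Nat.choose_le_pow_min {n k : ℕ} (hk : k ≤ n) : n.choose k ≤ n ^ min k (n - k) := by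
  rcases le_total k (n - k) with h | h
  · rw [min_eq_left h]
    exact Nat.choose_le_pow n k
  · rw [min_eq_right h, ← Nat.choose_symm hk]
    exact Nat.choose_le_pow n (n - k)

lemma choose_mul_choose_le_pow_min {m l s : ℕ} (hml : m ≤ l) (hs1 : 1 ≤ s) (hsm : s ≤ m) :
    m.choose s * l.choose (s - 1) ≤ (l ^ min s (l - (s - 1))) ^ 2 := by
  have hl : 1 ≤ l := by omega
  rw [sq]
  gcongr
  · calc m.choose s ≤ m ^ min s (m - s) := Nat.choose_le_pow_min hsm
      _ ≤ l ^ min s (m - s) := Nat.pow_le_pow_left hml _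
      _ ≤ l ^ min s (l - (s - 1)) := Nat.pow_le_pow_right hl (by omega)
  · calc l.choose (s - 1) ≤ l ^ min (s - 1) (l - (s - 1)) := Nat.choose_le_pow_min (by omega)
      _ ≤ l ^ min s (l - (s - 1)) := Nat.pow_le_pow_right hl (by omega)

lemma min_mul_le_two_mul {l s : ℕ} (hs : 1 ≤ s) (hsl : s ≤ l) :
    min s (l - (s - 1)) * l ≤ 2 * (s * (l - (s - 1))) := by
  have hl : l ≤ 2 * max s (l - (s - 1)) := by
    have := le_max_left s (l - (s - 1))
    have := le_max_right s (l - (s - 1))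
    omega
  calc min s (l - (s - 1)) * l ≤ min s (l - (s - 1)) * (2 * max s (l - (s - 1))) := by gcongr
    _ = 2 * (s * (l - (s - 1))) := by rw [mul_left_comm, min_mul_max]

lemma one_sub_pow_le_exp_neg_mul {p : ℝ} (hp1 : p ≤ 1) (n : ℕ) : (1 - p) ^ n ≤ exp (-(p * n)) :=
  calc (1 - p) ^ n ≤ exp (-p) ^ n := pow_le_pow_left₀ (by linarith) (one_sub_le_exp_neg p) n
    _ = exp (-(p * n)) := by rw [← exp_nat_mul]; ring_nf

lemma choose_mul_choose_mul_one_sub_pow_le {m l s : ℕ} {p c : ℝ} (hml : m ≤ l) (hlm : l ≤ m ^ 2)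
    (hs1 : 1 ≤ s) (hsm : s ≤ m) (hp0 : 0 ≤ p) (hp1 : p ≤ 1) (hc : 0 ≤ c)
    (hpl : (2 * c + 8) * log m ≤ p * l) :
    (m.choose s * l.choose (s - 1) * (1 - p) ^ (s * (l - (s - 1))) : ℝ) ≤ (m : ℝ) ^ (-c) := by
  set k := min s (l - (s - 1))
  have hk : (1 : ℝ) ≤ k := by exact_mod_cast (show 1 ≤ k by omega)
  have hm0 : (0 : ℝ) < m := by exact_mod_cast (show 0 < m by omega)
  have hlog : 0 ≤ log m := log_natCast_nonneg m
  have hbinom : (m.choose s * l.choose (s - 1) : ℝ) ≤ exp (4 * k * log m) := by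
    have : m.choose s * l.choose (s - 1) ≤ m ^ (4 * k) :=
      calc m.choose s * l.choose (s - 1) ≤ (l ^ k) ^ 2 := choose_mul_choose_le_pow_min hml hs1 hsm
        _ ≤ ((m ^ 2) ^ k) ^ 2 := by gcongr
        _ = m ^ (4 * k) := by ring
    calc (m.choose s * l.choose (s - 1) : ℝ) ≤ (m : ℝ) ^ (4 * k) := by exact_mod_cast this
      _ = exp (4 * k * log m) := by
        rw [← exp_log hm0, ← exp_nat_mul, log_exp]
        push_cast
        ring_nf
  have hedges : (1 - p) ^ (s * (l - (s - 1))) ≤ exp (-((c + 4) * k * log m)) := by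
    have hkl : (k * l : ℝ) ≤ 2 * (s * (l - (s - 1)) : ℕ) := by
      exact_mod_cast min_mul_le_two_mul hs1 (hsm.trans hml)
    refine (one_sub_pow_le_exp_neg_mul hp1 _).trans (exp_le_exp.mpr ?_)
    nlinarith
  calc (m.choose s * l.choose (s - 1) * (1 - p) ^ (s * (l - (s - 1))) : ℝ)
      ≤ exp (4 * k * log m) * exp (-((c + 4) * k * log m)) :=
        mul_le_mul hbinom hedges (pow_nonneg (sub_nonneg.mpr hp1) _) (exp_nonneg _)
    _ ≤ exp (log m * -c) := by
        rw [← exp_add, exp_le_exp]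
        nlinarith [mul_nonneg hc hlog]
    _ = (m : ℝ) ^ (-c) := (rpow_def_of_pos hm0 _).symm

theorem bipartite_matching_general (Λ q : ℝ) (hq : 0 < q) :
    ∃ C : ℝ, 0 < C ∧ ∃ M : ℕ, ∀ m : ℕ, M ≤ m → ∀ l : ℕ, m ≤ l → (l : ℝ) ≤ Λ * m →
      ∀ p : ℝ, 0 < p → p ≤ 1 → C * Real.log m ≤ p * l →
      ENNReal.ofReal (1 - (m : ℝ) ^ (-q)) ≤
        bipartite m l p
          {ω | ∃ φ : Fin m → Fin l, Function.Injective φ ∧ ∀ u, ω (u, φ u) = true} := by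
  refine ⟨2 * q + 10, by linarith, ⌈Λ⌉₊ + 1, fun m hm l hml hlΛ p hp0 hp1 hpl => ?_⟩
  have hm0 : (0 : ℝ) < m := by exact_mod_cast (show 0 < m by omega)
  have hlm : l ≤ m ^ 2 := by
    have hΛm : Λ ≤ m := (Nat.le_ceil Λ).trans (by exact_mod_cast (show ⌈Λ⌉₊ ≤ m by omega))
    have : (l : ℝ) ≤ m ^ 2 := hlΛ.trans (by nlinarith)
    exact_mod_cast this
  have hsum : ∑ s ∈ Icc 1 m,
      (m.choose s * l.choose (s - 1) * (1 - p) ^ (s * (l - (s - 1))) : ℝ) ≤ (m : ℝ) ^ (-q) :=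
    calc _ ≤ ∑ s ∈ Icc 1 m, (m : ℝ) ^ (-(q + 1)) := sum_le_sum fun s hs =>
          choose_mul_choose_mul_one_sub_pow_le hml hlm (mem_Icc.mp hs).1 (mem_Icc.mp hs).2
            hp0.le hp1 (by linarith) (by linarith)
      _ = (m : ℝ) ^ (-q) := by
          rw [sum_const, Nat.card_Icc, Nat.add_sub_cancel, nsmul_eq_mul,
            show -q = 1 + -(q + 1) by ring, rpow_add hm0, rpow_one]
  have hfail : bipartite m l p {ω | ¬ HasLeftMatching ω} ≤ ENNReal.ofReal ((m : ℝ) ^ (-q)) := by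
    have := measure_not_hasLeftMatching_le (α := Fin m) (β := Fin l) hp0.le hp1
    rw [Fintype.card_fin, Fintype.card_fin] at this
    exact this.trans (ENNReal.ofReal_le_ofReal hsum)
  unfold bipartite at hfail ⊢
  rw [← compl_compl {ω | _}, prob_compl_eq_one_sub MeasurableSet.of_discrete,
    ENNReal.ofReal_sub _ (by positivity), ENNReal.ofReal_one]
  exact tsub_le_tsub_left hfail 1

/-- Left-perfect matching in a random bipartite graph.
Fix `Λ ≥ 1` and `q > 0`. There are `C = C(Λ,q) > 0` and `M` such that for all `m ≥ M`,
`m ≤ ℓ ≤ Λ·m`, and `p ∈ (0,1]` with `p·ℓ ≥ C·log m`, with probability at least `1 − m^{−q}`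
the random bipartite graph contains a matching saturating the left side. -/
theorem bipartite_matching (Λ q : ℝ) (hΛ : 1 ≤ Λ) (hq : 0 < q) :
    ∃ C : ℝ, 0 < C ∧ ∃ M : ℕ, ∀ m : ℕ, M ≤ m → ∀ l : ℕ, m ≤ l → (l : ℝ) ≤ Λ * m →
      ∀ p : ℝ, 0 < p → p ≤ 1 → C * Real.log m ≤ p * l →
      ENNReal.ofReal (1 - (m : ℝ) ^ (-q)) ≤
        bipartite m l p
          {ω | ∃ φ : Fin m → Fin l, Function.Injective φ ∧ ∀ u, ω (u, φ u) = true} :=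
  bipartite_matching_general Λ q hq

end BipMatch
end

section
/- Fix n ≥ 1 and let f ∈ ℝ^{2n} be the unit vector with f_i = 1/√(2n) for 1 ≤ i ≤ n and f_i = −1/√(2n) for n+1 ≤ i ≤ 2n. Let v ∈ ℝ^{2n} be a unit vector with ∑_i v_i = 0 and ⟨v, f⟩ ≠ 0. Then (1/(2n)) · min_{s ∈ {+1,−1}} |{ i : s·v_i·f_i ≤ 0 }| ≤ (1 − ⟨v,f⟩²)/⟨v,f⟩². -/
/-!
Write `c = ⟨v, f⟩`. On every coordinate where `v i` and `c * f i` disagree in sign,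
`(v i - c * f i)² ≥ (c * f i)² = c² / (2n)`, while `‖v - c f‖² = 1 - c²`. So at most
`2n (1 - c²) / c²` coordinates disagree, and these are the misclassified ones for the sign flip
`s = sign c`.
-/

open Finset

variable {ι : Type*} [Fintype ι]

lemma min_card_filter_le_card_filter_mul (x : ι → ℝ) (c : ℝ) :
    min #{i | x i ≤ 0} #{i | -x i ≤ 0} ≤ #{i | c * x i ≤ 0} := by
  rcases le_or_gt 0 c with hc | hc
  · refine (min_le_left _ _).trans (card_le_card (monotone_filter_right _ fun i _ hi => ?_))
    exact mul_nonpos_of_nonneg_of_nonpos hc hi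
  · refine (min_le_right _ _).trans (card_le_card (monotone_filter_right _ fun i _ hi => ?_))
    exact mul_nonpos_of_nonpos_of_nonneg hc.le (neg_nonpos.mp hi)

lemma sum_sq_sub_inner_mul_eq (v f : ι → ℝ) (hf : ∑ i, f i ^ 2 = 1) :
    ∑ i, (v i - (∑ j, v j * f j) * f i) ^ 2 = ∑ i, v i ^ 2 - (∑ j, v j * f j) ^ 2 := by
  set c := ∑ j, v j * f j
  calc ∑ i, (v i - c * f i) ^ 2 = ∑ i, (v i ^ 2 - 2 * c * (v i * f i) + c ^ 2 * f i ^ 2) :=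
        sum_congr rfl fun i _ => by ring
    _ = ∑ i, v i ^ 2 - 2 * c * c + c ^ 2 * ∑ i, f i ^ 2 := by
        rw [sum_add_distrib, sum_sub_distrib, ← mul_sum, ← mul_sum]
    _ = ∑ i, v i ^ 2 - c ^ 2 := by rw [hf]; ring

lemma card_filter_mul_le_sum_sq_sub (v f : ι → ℝ) {a : ℝ} (hf_unit : ∑ i, f i ^ 2 = 1)
    (hf_flat : ∀ i, f i ^ 2 = a) :
    #{i | (∑ j, v j * f j) * (v i * f i) ≤ 0} * ((∑ j, v j * f j) ^ 2 * a)
      ≤ ∑ i, v i ^ 2 - (∑ j, v j * f j) ^ 2 := by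
  set c := ∑ j, v j * f j
  calc #{i | c * (v i * f i) ≤ 0} * (c ^ 2 * a)
        = ∑ i with c * (v i * f i) ≤ 0, (c * f i) ^ 2 := by
        simp only [mul_pow, hf_flat, sum_const, nsmul_eq_mul]
    _ ≤ ∑ i with c * (v i * f i) ≤ 0, (v i - c * f i) ^ 2 := by
        refine sum_le_sum fun i hi => ?_
        have hi : c * (v i * f i) ≤ 0 := (mem_filter.mp hi).2
        nlinarith [sq_nonneg (v i)]
    _ ≤ ∑ i, (v i - c * f i) ^ 2 :=
        sum_le_sum_of_subset_of_nonneg (filter_subset _ _) fun i _ _ => sq_nonneg _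
    _ = ∑ i, v i ^ 2 - c ^ 2 := sum_sq_sub_inner_mul_eq v f hf_unit

theorem sign_error_bound_general (n : ℕ) (hn : 1 ≤ n) (v : Fin (2*n) → ℝ)
    (f : Fin (2*n) → ℝ)
    (hf : f = fun i : Fin (2*n) => if (i : ℕ) < n then 1 / Real.sqrt (2*n) else -(1 / Real.sqrt (2*n)))
    (hv_unit : ∑ i, v i ^ 2 = 1)
    (hip : ∑ i, v i * f i ≠ 0) :
    (1 / (2 * (n : ℝ))) *
        min ((univ.filter (fun i => v i * f i ≤ 0)).card : ℝ)
            ((univ.filter (fun i => -v i * f i ≤ 0)).card : ℝ)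
      ≤ (1 - (∑ i, v i * f i) ^ 2) / (∑ i, v i * f i) ^ 2 := by
  set c := ∑ i, v i * f i
  have h2n : (0 : ℝ) < 2 * n := by positivity
  have hf_flat : ∀ i, f i ^ 2 = 1 / (2 * (n : ℝ)) := fun i => by
    simp only [hf]
    split_ifs <;> simp only [neg_sq, div_pow, one_pow, Real.sq_sqrt h2n.le]
  have hf_unit : ∑ i, f i ^ 2 = 1 := by
    simp only [hf_flat, sum_const, card_univ, Fintype.card_fin, nsmul_eq_mul]
    push_cast
    field_simp
  have hmin : min (#{i | v i * f i ≤ 0} : ℝ) #{i | -v i * f i ≤ 0}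
      ≤ #{i | c * (v i * f i) ≤ 0} := by
    simp only [neg_mul]
    exact_mod_cast min_card_filter_le_card_filter_mul (fun i => v i * f i) c
  have hbound := card_filter_mul_le_sum_sq_sub v f hf_unit hf_flat
  rw [hv_unit] at hbound
  rw [le_div_iff₀ (pow_two_pos_of_ne_zero hip)]
  calc 1 / (2 * (n : ℝ)) * min (#{i | v i * f i ≤ 0} : ℝ) #{i | -v i * f i ≤ 0} * c ^ 2
      ≤ 1 / (2 * (n : ℝ)) * #{i | c * (v i * f i) ≤ 0} * c ^ 2 := by gcongr
    _ = #{i | c * (v i * f i) ≤ 0} * (c ^ 2 * (1 / (2 * (n : ℝ)))) := by ring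
    _ ≤ 1 - c ^ 2 := hbound

/-- From principal angle to sign error.
Let `f` be the unit block-sign vector on `ℝ^{2n}` and `v` a unit vector with zero coordinate sum
and `⟨v,f⟩ ≠ 0`. Then the misclassification rate of the sign clustering induced by `v`
(minimized over the global sign flip) is at most `(1 − ⟨v,f⟩²)/⟨v,f⟩² = tan²∠(v,f)`. -/
theorem sign_error_bound (n : ℕ) (hn : 1 ≤ n) (v : Fin (2*n) → ℝ)
    (f : Fin (2*n) → ℝ)
    (hf : f = fun i : Fin (2*n) => if (i : ℕ) < n then 1 / Real.sqrt (2*n) else -(1 / Real.sqrt (2*n)))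
    (hv_unit : ∑ i, v i ^ 2 = 1)
    (hv_sum : ∑ i, v i = 0)
    (hip : ∑ i, v i * f i ≠ 0) :
    (1 / (2 * (n : ℝ))) *
        min ((univ.filter (fun i => v i * f i ≤ 0)).card : ℝ)
            ((univ.filter (fun i => -v i * f i ≤ 0)).card : ℝ)
      ≤ (1 - (∑ i, v i * f i) ^ 2) / (∑ i, v i * f i) ^ 2 :=
  sign_error_bound_general n hn v f hf hv_unit hip
end

section
/- Define, for parameters n ≥ 2 and 0 < p1 < p0 < 1, the map Φ_n(a,b) = (φ_in(a,b), φ_out(a,b)) on (0,∞)² by φ_in(a,b) = ((n−2)p0²·a + n·p1²·b)/((n−1)p0·a + n·p1·b) and φ_out(a,b) = (2n−2)·p0·p1·b/((n−1)p0·a + n·p1·b), and the recursion w_in^{(0)} = w_out^{(0)} = 1, (w_in^{(t+1)}, w_out^{(t+1)}) = Φ_n(w_in^{(t)}, w_out^{(t)}). Fix T ∈ ℕ and ρ ∈ (0,1/2), and suppose that for every n the parameters satisfy ρ ≤ p1(n)/p0(n) ≤ 1−ρ and p0(n) ≤ 1−ρ; let p̄ = (p0+p1)/2. Then there exist constants 0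 < c_{T,ρ} ≤ C_{T,ρ} < ∞ (depending only on T and ρ) and N such that for all n ≥ N and all t ∈ {1, …, T}: c_{T,ρ}·p̄ ≤ w_out^{(t)} ≤ w_in^{(t)} ≤ C_{T,ρ}·p̄. -/
/-!
Once `ρ n ≥ 3`, a single step of `Φ_n` from any `0 < b ≤ a` keeps `0 < b' ≤ a'`, lands `a'` in
`[p1, p0]`, and shrinks the ratio `b / a` by at most the factor `ρ` (because `ρ p0 ≤ p1`).
Starting from ratio `1`, after `t ≥ 1` steps `w_out ≥ ρ^t w_in ≥ ρ^t p1 ≥ ρ^(t+1) p0`, while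
`w_in ≤ p0 ≤ 2 p̄`; so `c = ρ^(T+1)`, `C = 2` and `N = ⌈3/ρ⌉` work.
-/

namespace MeanField

/-- The mean-field map `Φ_n` on pairs of weights. -/
noncomputable def Phi (n : ℕ) (p0 p1 : ℝ) (ab : ℝ × ℝ) : ℝ × ℝ :=
  ((((n : ℝ) - 2) * p0 ^ 2 * ab.1 + (n : ℝ) * p1 ^ 2 * ab.2)
      / (((n : ℝ) - 1) * p0 * ab.1 + (n : ℝ) * p1 * ab.2),
   ((2 * (n : ℝ) - 2) * p0 * p1 * ab.2)
      / (((n : ℝ) - 1) * p0 * ab.1 + (n : ℝ) * p1 * ab.2))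

/-- The benchmark two-weight recursion, started at `(1,1)`. -/
noncomputable def wseq (n : ℕ) (p0 p1 : ℝ) : ℕ → ℝ × ℝ
  | 0 => (1, 1)
  | t + 1 => Phi n p0 p1 (wseq n p0 p1 t)

section OneStep

variable {n : ℕ} {ρ p0 p1 a b : ℝ}

lemma Phi_denom_pos (hn : 2 ≤ n) (hp0 : 0 < p0) (hp1 : 0 ≤ p1) (ha : 0 < a) (hb : 0 ≤ b) :
    0 < ((n : ℝ) - 1) * p0 * a + n * p1 * b := by
  have hn' : (2 : ℝ) ≤ n := by exact_mod_cast hn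
  have : 0 < (n : ℝ) - 1 := by linarith
  positivity

lemma Phi_snd_pos (hn : 2 ≤ n) (hp0 : 0 < p0) (hp1 : 0 < p1) (ha : 0 < a) (hb : 0 < b) :
    0 < (Phi n p0 p1 (a, b)).2 := by
  have hn' : (2 : ℝ) ≤ n := by exact_mod_cast hn
  have hnum : 0 < (2 * (n : ℝ) - 2) * p0 * p1 * b := by
    have : 0 < 2 * (n : ℝ) - 2 := by linarith
    positivity
  exact div_pos hnum (Phi_denom_pos hn hp0 hp1.le ha hb.le)

/-- With `(a', b') = Φ_n (a, b)` and `D` their common denominator,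
`D (a' - b') = (n-2) p0² (a-b) + b (p0-p1) (n (p0-p1) - 2 p0)`. -/
lemma Phi_snd_le_fst (hn : 2 ≤ n) (hp0 : 0 < p0) (hp1 : 0 ≤ p1) (hp : p1 ≤ p0)
    (hgap : 2 * p0 ≤ n * (p0 - p1)) (hb : 0 ≤ b) (hba : b ≤ a) (ha : 0 < a) :
    (Phi n p0 p1 (a, b)).2 ≤ (Phi n p0 p1 (a, b)).1 := by
  have hn' : (2 : ℝ) ≤ n := by exact_mod_cast hn
  rw [Phi, div_le_div_iff_of_pos_right (Phi_denom_pos hn hp0 hp1 ha hb)]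
  have h1 : 0 ≤ (a - b) * (((n : ℝ) - 2) * p0 ^ 2) :=
    mul_nonneg (sub_nonneg.2 hba) (mul_nonneg (by linarith) (sq_nonneg p0))
  have h2 : 0 ≤ b * (p0 - p1) * (n * (p0 - p1) - 2 * p0) :=
    mul_nonneg (mul_nonneg hb (by linarith)) (by linarith)
  linarith

/-- `D (a' - p1) = p0 a ((n-2) p0 - (n-1) p1)`. -/
lemma le_Phi_fst (hn : 2 ≤ n) (hp0 : 0 < p0) (hp1 : 0 ≤ p1)
    (hlow : ((n : ℝ) - 1) * p1 ≤ (n - 2) * p0) (ha : 0 < a) (hb : 0 ≤ b) :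
    p1 ≤ (Phi n p0 p1 (a, b)).1 := by
  rw [Phi, le_div_iff₀ (Phi_denom_pos hn hp0 hp1 ha hb)]
  nlinarith [mul_nonneg (mul_pos hp0 ha).le (sub_nonneg.2 hlow)]

/-- `D (p0 - a') = p0² a + n p1 b (p0 - p1)`. -/
lemma Phi_fst_le (hn : 2 ≤ n) (hp0 : 0 < p0) (hp1 : 0 ≤ p1) (hp : p1 ≤ p0)
    (ha : 0 < a) (hb : 0 ≤ b) :
    (Phi n p0 p1 (a, b)).1 ≤ p0 := by
  rw [Phi, div_le_iff₀ (Phi_denom_pos hn hp0 hp1 ha hb)]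
  have h1 : 0 < p0 ^ 2 * a := by positivity
  have h2 : 0 ≤ (n : ℝ) * (p1 * b) * (p0 - p1) := by
    have := sub_nonneg.2 hp
    positivity
  linarith

lemma mul_div_le_Phi_snd_div_fst (hn : 2 ≤ n) (hρ : 0 ≤ ρ) (hp1 : 0 < p1) (hp : p1 ≤ p0)
    (hρp : ρ * p0 ≤ p1) (hb : 0 < b) (hba : b ≤ a) :
    ρ * (b / a) ≤ (Phi n p0 p1 (a, b)).2 / (Phi n p0 p1 (a, b)).1 := by
  have hn' : (2 : ℝ) ≤ n := by exact_mod_cast hn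
  have hp0 : 0 < p0 := hp1.trans_le hp
  have ha : 0 < a := hb.trans_le hba
  have hD := Phi_denom_pos hn hp0 hp1.le ha hb.le
  have hN : 0 < ((n : ℝ) - 2) * p0 ^ 2 * a + n * p1 ^ 2 * b := by
    have : 0 ≤ (n : ℝ) - 2 := by linarith
    have : 0 ≤ ((n : ℝ) - 2) * p0 ^ 2 * a := by positivity
    have : 0 < (n : ℝ) * p1 ^ 2 * b := by positivity
    linarith
  simp only [Phi]
  rw [div_div_div_cancel_right₀ hD.ne', ← mul_div_assoc, div_le_div_iff₀ ha hN]
  have hin : ρ * (((n : ℝ) - 2) * p0 ^ 2 * a) ≤ ((n : ℝ) - 2) * p0 * p1 * a := by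
    have : 0 ≤ ((n : ℝ) - 2) * p0 * a := by
      have : 0 ≤ (n : ℝ) - 2 := by linarith
      positivity
    nlinarith [mul_nonneg this (sub_nonneg.2 hρp)]
  have hout : ρ * ((n : ℝ) * p1 ^ 2 * b) ≤ n * p0 * p1 * a := by
    have hρp1 : ρ * p1 ≤ p0 := by nlinarith
    have : ρ * p1 * b ≤ p0 * a := mul_le_mul hρp1 hba hb.le hp0.le
    have : 0 ≤ (n : ℝ) * p1 := by positivity
    nlinarith
  calc ρ * b * (((n : ℝ) - 2) * p0 ^ 2 * a + n * p1 ^ 2 * b)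
      = b * (ρ * (((n : ℝ) - 2) * p0 ^ 2 * a) + ρ * ((n : ℝ) * p1 ^ 2 * b)) := by ring
    _ ≤ b * (((n : ℝ) - 2) * p0 * p1 * a + n * p0 * p1 * a) :=
        mul_le_mul_of_nonneg_left (add_le_add hin hout) hb.le
    _ = (2 * (n : ℝ) - 2) * p0 * p1 * b * a := by ring

end OneStep

lemma large_n_conditions {n : ℕ} {ρ p0 p1 : ℝ} (hn : 3 ≤ ρ * n) (hp0 : 0 < p0)
    (hρp : ρ * p0 ≤ p1) (hpρ : p1 ≤ (1 - ρ) * p0) :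
    2 ≤ n ∧ 2 * p0 ≤ n * (p0 - p1) ∧ ((n : ℝ) - 1) * p1 ≤ (n - 2) * p0 := by
  have hρ : ρ ≤ 1 / 2 := by nlinarith
  have hn6 : (6 : ℝ) ≤ n := by nlinarith
  exact ⟨by exact_mod_cast (by linarith : (2 : ℝ) ≤ n), by nlinarith, by nlinarith⟩

section Orbit

variable {n : ℕ} {ρ p0 p1 : ℝ}

lemma wseq_snd_pos_and_le_fst (hn : 2 ≤ n) (hp1 : 0 < p1) (hp : p1 ≤ p0)
    (hgap : 2 * p0 ≤ n * (p0 - p1)) (t : ℕ) :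
    0 < (wseq n p0 p1 t).2 ∧ (wseq n p0 p1 t).2 ≤ (wseq n p0 p1 t).1 := by
  have hp0 : 0 < p0 := hp1.trans_le hp
  induction t with
  | zero => simp [wseq]
  | succ t ih =>
    obtain ⟨hb, hba⟩ := ih
    have ha := hb.trans_le hba
    exact ⟨Phi_snd_pos hn hp0 hp1 ha hb, Phi_snd_le_fst hn hp0 hp1.le hp hgap hb.le hba ha⟩

lemma pow_le_wseq_snd_div_fst (hn : 2 ≤ n) (hρ : 0 ≤ ρ) (hp1 : 0 < p1) (hp : p1 ≤ p0)
    (hgap : 2 * p0 ≤ n * (p0 - p1)) (hρp : ρ * p0 ≤ p1) (t : ℕ) :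
    ρ ^ t ≤ (wseq n p0 p1 t).2 / (wseq n p0 p1 t).1 := by
  induction t with
  | zero => simp [wseq]
  | succ t ih =>
    obtain ⟨hb, hba⟩ := wseq_snd_pos_and_le_fst hn hp1 hp hgap t
    calc ρ ^ (t + 1) = ρ * ρ ^ t := pow_succ' ρ t
      _ ≤ ρ * ((wseq n p0 p1 t).2 / (wseq n p0 p1 t).1) := by gcongr
      _ ≤ _ := mul_div_le_Phi_snd_div_fst hn hρ hp1 hp hρp hb hba

lemma wseq_fst_mem_Icc (hn : 2 ≤ n) (hp1 : 0 < p1) (hp : p1 ≤ p0)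
    (hgap : 2 * p0 ≤ n * (p0 - p1)) (hlow : ((n : ℝ) - 1) * p1 ≤ (n - 2) * p0) {t : ℕ}
    (ht : 1 ≤ t) : (wseq n p0 p1 t).1 ∈ Set.Icc p1 p0 := by
  obtain ⟨s, rfl⟩ : ∃ s, t = s + 1 := ⟨t - 1, by omega⟩
  have hp0 : 0 < p0 := hp1.trans_le hp
  obtain ⟨hb, hba⟩ := wseq_snd_pos_and_le_fst hn hp1 hp hgap s
  have ha := hb.trans_le hba
  exact ⟨le_Phi_fst hn hp0 hp1.le hlow ha hb.le, Phi_fst_le hn hp0 hp1.le hp ha hb.le⟩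

lemma pow_succ_mul_le_wseq_snd (hn : 2 ≤ n) (hρ : 0 ≤ ρ) (hp1 : 0 < p1) (hp : p1 ≤ p0)
    (hgap : 2 * p0 ≤ n * (p0 - p1)) (hlow : ((n : ℝ) - 1) * p1 ≤ (n - 2) * p0)
    (hρp : ρ * p0 ≤ p1) {t : ℕ} (ht : 1 ≤ t) :
    ρ ^ (t + 1) * p0 ≤ (wseq n p0 p1 t).2 := by
  obtain ⟨hb, hba⟩ := wseq_snd_pos_and_le_fst hn hp1 hp hgap t
  have ha := hb.trans_le hba
  calc ρ ^ (t + 1) * p0 = ρ ^ t * (ρ * p0) := by ring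
    _ ≤ ρ ^ t * p1 := by gcongr
    _ ≤ ρ ^ t * (wseq n p0 p1 t).1 := by
      gcongr; exact (wseq_fst_mem_Icc hn hp1 hp hgap hlow ht).1
    _ ≤ (wseq n p0 p1 t).2 :=
      (le_div_iff₀ ha).mp (pow_le_wseq_snd_div_fst hn hρ hp1 hp hgap hρp t)

end Orbit

/-- Benchmark weights are of order `p̄` for `1 ≤ t ≤ T`.
Fix `T` and `ρ ∈ (0,1/2)`. Under the balanced-contrast window there are constants
`0 < c_{T,ρ} ≤ C_{T,ρ}` and `N` (depending only on `T` and `ρ`) so that for all `n ≥ N` and all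
`t ∈ {1,…,T}`, `c_{T,ρ}·p̄ ≤ w_out^{(t)} ≤ w_in^{(t)} ≤ C_{T,ρ}·p̄`. -/
theorem benchmark_weights_order (T : ℕ) (ρ : ℝ) (hρ0 : 0 < ρ) (hρ2 : ρ < 1/2) :
    ∃ c C : ℝ, 0 < c ∧ c ≤ C ∧ ∃ N : ℕ, ∀ n : ℕ, N ≤ n →
      ∀ p0 p1 : ℝ, 0 < p1 → p1 < p0 → p0 < 1 →
        ρ ≤ p1 / p0 → p1 / p0 ≤ 1 - ρ → p0 ≤ 1 - ρ →
      ∀ t : ℕ, 1 ≤ t → t ≤ T →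
        c * ((p0 + p1) / 2) ≤ (wseq n p0 p1 t).2
        ∧ (wseq n p0 p1 t).2 ≤ (wseq n p0 p1 t).1
        ∧ (wseq n p0 p1 t).1 ≤ C * ((p0 + p1) / 2) := by
  refine ⟨ρ ^ (T + 1), 2, by positivity, (pow_le_one₀ hρ0.le (by linarith)).trans one_le_two,
    ⌈3 / ρ⌉₊, ?_⟩
  intro n hN p0 p1 hp1 hp _ hρp hpρ _ t ht1 htT
  have hp0 : 0 < p0 := hp1.trans hp
  replace hρp : ρ * p0 ≤ p1 := (le_div_iff₀ hp0).mp hρp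
  replace hpρ : p1 ≤ (1 - ρ) * p0 := (div_le_iff₀ hp0).mp hpρ
  have hn : 3 ≤ ρ * n := (div_le_iff₀' hρ0).mp (Nat.ceil_le.mp hN)
  obtain ⟨h2n, hgap, hlow⟩ := large_n_conditions hn hp0 hρp hpρ
  refine ⟨?_, (wseq_snd_pos_and_le_fst h2n hp1 hp.le hgap t).2, ?_⟩
  · calc ρ ^ (T + 1) * ((p0 + p1) / 2) ≤ ρ ^ (t + 1) * p0 :=
          mul_le_mul (pow_le_pow_of_le_one hρ0.le (by linarith) (by omega)) (by linarith)
            (by positivity) (by positivity)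
      _ ≤ (wseq n p0 p1 t).2 := pow_succ_mul_le_wseq_snd h2n hρ0.le hp1 hp.le hgap hlow hρp ht1
  · calc (wseq n p0 p1 t).1 ≤ p0 := (wseq_fst_mem_Icc h2n hp1 hp.le hgap hlow ht1).2
      _ ≤ 2 * ((p0 + p1) / 2) := by linarith

end MeanField
end

section
/- Let G be a finite simple graph with vertex set V and let W : V×V → [0,∞) be a symmetric weight function with W_{uv} > 0 only if {u,v} is an edge of G. Let {x,y} be an edge with weighted degrees d_x(W) = ∑_u W_{xu} > 0 and d_y(W) > 0, write p_{x,W}(z) = W_{xz}/d_x(W), and define the overlap Ov_{xy}(W) = p_{x,W}(y) + p_{y,W}(x) + ∑_{z ∈ Γ(x)∩Γ(y)} min{p_{x,W}(z), p_{y,W}(z)}. For α ∈ [1/2, 1), let m^α_{x,W} be the probability measure with m^α_{x,W}(x) = α and m^α_{x,W}(z) = (1−α)·p_{x,W}(z) for z ∈ Γ(x), and similarly m^α_{y,W}. Then: (i) ∑_{u ∈ V} min{m^α_{x,W}(u), m^α_{y,W}(u)} = (1−α)·Ov_{xy}(W); and (ii) every coupling of m^α_{x,W} and m^α_{y,W}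 has transport cost at least 1 − (1−α)·Ov_{xy}(W). -/
open Finset

namespace WeightedCurv

variable {V : Type*} [Fintype V] [DecidableEq V]

/-- Weighted degree. -/
noncomputable def dW (W : V → V → ℝ) (x : V) : ℝ := ∑ u, W x u

/-- Neighbour distribution at `x` induced by the weights `W`. -/
noncomputable def pW (W : V → V → ℝ) (x z : V) : ℝ := W x z / dW W x

/-- The `α`-lazy measure at `x` with weights `W`. -/
noncomputable def lazyW (W : V → V → ℝ) (α : ℝ) (x : V) : V → ℝ :=
  fun v => if v = x then α else (1 - α) * pW W x v

/-- The overlap functional of an edge `{x,y}`. -/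
noncomputable def Ov (G : SimpleGraph V) [DecidableRel G.Adj] (W : V → V → ℝ) (x y : V) : ℝ :=
  pW W x y + pW W y x +
    ∑ z ∈ G.neighborFinset x ∩ G.neighborFinset y, min (pW W x z) (pW W y z)

/-- `cpl` is a coupling of the measures `m1` and `m2` on `V`. -/
def IsCoupling (cpl : V × V → ℝ) (m1 m2 : V → ℝ) : Prop :=
  (∀ p, 0 ≤ cpl p) ∧ (∀ u, ∑ v, cpl (u, v) = m1 u) ∧ (∀ v, ∑ u, cpl (u, v) = m2 v)

/-- Transport cost of `cpl` with respect to the graph distance of `G`. -/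
noncomputable def cost (G : SimpleGraph V) (cpl : V × V → ℝ) : ℝ :=
  ∑ p : V × V, cpl p * (G.dist p.1 p.2 : ℝ)

end WeightedCurv

/-!
At `x` the lazy measure of `y` is `(1-α)·p_y(x) ≤ 1-α ≤ α`, so the pointwise minimum there is
the neighbour part, and symmetrically at `y`; at every other vertex it is `(1-α)·min(p_x, p_y)`,
which vanishes off the common neighbourhood. This gives (i). For (ii), a coupling can leave at
most `min(m_x(u), m_y(u))` in place at `u`, and all remaining mass moves distance at least `1`,
because both measures live on the component of the edge `xy` (where `G.dist` is not junk).
-/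

namespace WeightedCurv

variable {V : Type*} [Fintype V]

section Coupling

variable {cpl : V × V → ℝ} {m1 m2 : V → ℝ}

lemma IsCoupling.apply_le_left (h : IsCoupling cpl m1 m2) (u v : V) : cpl (u, v) ≤ m1 u := by
  rw [← h.2.1 u]
  exact single_le_sum (fun w _ => h.1 (u, w)) (mem_univ v)

lemma IsCoupling.apply_le_right (h : IsCoupling cpl m1 m2) (u v : V) : cpl (u, v) ≤ m2 v := by
  rw [← h.2.2 v]
  exact single_le_sum (fun w _ => h.1 (w, v)) (mem_univ u)

lemma IsCoupling.sum_eq (h : IsCoupling cpl m1 m2) : ∑ p, cpl p = ∑ u, m1 u := by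
  rw [Fintype.sum_prod_type]
  exact sum_congr rfl fun u _ => h.2.1 u

lemma IsCoupling.sum_diag_le_sum_min (h : IsCoupling cpl m1 m2) :
    ∑ u, cpl (u, u) ≤ ∑ u, min (m1 u) (m2 u) :=
  sum_le_sum fun u _ => le_min (h.apply_le_left u u) (h.apply_le_right u u)

lemma IsCoupling.apply_le_mul_dist {G : SimpleGraph V} (h : IsCoupling cpl m1 m2)
    (hreach : ∀ u v, m1 u ≠ 0 → m2 v ≠ 0 → G.Reachable u v) {u v : V} (huv : u ≠ v) :
    cpl (u, v) ≤ cpl (u, v) * G.dist u v := by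
  rcases (h.1 (u, v)).eq_or_lt with hzero | hpos
  · rw [← hzero, zero_mul]
  have hu : m1 u ≠ 0 := (hpos.trans_le (h.apply_le_left u v)).ne'
  have hv : m2 v ≠ 0 := (hpos.trans_le (h.apply_le_right u v)).ne'
  have hdist : (1 : ℝ) ≤ G.dist u v := by
    exact_mod_cast (hreach u v hu hv).pos_dist_of_ne huv
  exact le_mul_of_one_le_right hpos.le hdist

lemma IsCoupling.sum_sub_sum_min_le_cost (G : SimpleGraph V) (h : IsCoupling cpl m1 m2)
    (hreach : ∀ u v, m1 u ≠ 0 → m2 v ≠ 0 → G.Reachable u v) :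
    ∑ u, m1 u - ∑ u, min (m1 u) (m2 u) ≤ cost G cpl := by
  classical
  have hoff : ∀ p : V × V, cpl p - (if p.1 = p.2 then cpl p else 0) ≤ cpl p * G.dist p.1 p.2 := by
    rintro ⟨u, v⟩
    by_cases huv : u = v
    · simp [huv]
    · simpa [huv] using h.apply_le_mul_dist hreach huv
  calc ∑ u, m1 u - ∑ u, min (m1 u) (m2 u) ≤ ∑ p, cpl p - ∑ u, cpl (u, u) := by
        linarith [h.sum_eq, h.sum_diag_le_sum_min]
    _ = ∑ p : V × V, (cpl p - if p.1 = p.2 then cpl p else 0) := by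
        rw [sum_sub_distrib, Fintype.sum_prod_type (fun p => if p.1 = p.2 then cpl p else 0)]
        simp
    _ ≤ cost G cpl := sum_le_sum fun p _ => hoff p

end Coupling

section Weights

variable {G : SimpleGraph V} {W : V → V → ℝ} {x : V}

lemma pW_nonneg (hnn : ∀ u v, 0 ≤ W u v) (x z : V) : 0 ≤ pW W x z :=
  div_nonneg (hnn x z) (sum_nonneg fun u _ => hnn x u)

lemma pW_le_one (hnn : ∀ u v, 0 ≤ W u v) (hdx : 0 < dW W x) (z : V) : pW W x z ≤ 1 :=
  (div_le_one hdx).2 (single_le_sum (fun u _ => hnn x u) (mem_univ z))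

lemma sum_pW (hdx : dW W x ≠ 0) : ∑ z, pW W x z = 1 := by
  unfold pW
  rw [← sum_div, ← dW, div_self hdx]

lemma pW_eq_zero_of_not_adj (hsupp : ∀ u v, W u v ≠ 0 → G.Adj u v) {z : V} (h : ¬ G.Adj x z) :
    pW W x z = 0 := by
  rw [pW, not_imp_comm.1 (hsupp x z) h, zero_div]

end Weights

variable [DecidableEq V]

section LazyMeasure

variable {G : SimpleGraph V} {W : V → V → ℝ} {α : ℝ} {x y : V}

lemma lazyW_self : lazyW W α x x = α := if_pos rfl

lemma lazyW_of_ne {v : V} (hv : v ≠ x) : lazyW W α x v = (1 - α) * pW W x v := if_neg hv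

lemma sum_lazyW (hdx : dW W x ≠ 0) (hxx : pW W x x = 0) : ∑ u, lazyW W α x u = 1 := by
  rw [← add_sum_erase _ _ (mem_univ x), lazyW_self,
    sum_congr rfl fun u hu => lazyW_of_ne (ne_of_mem_erase hu), ← mul_sum,
    sum_erase _ hxx, sum_pW hdx]
  ring

lemma reachable_of_lazyW_ne_zero (hsupp : ∀ u v, W u v ≠ 0 → G.Adj u v) {v : V}
    (h : lazyW W α x v ≠ 0) : G.Reachable x v := by
  by_cases hv : v = x
  · rw [hv]
  by_contra hnot
  rw [lazyW_of_ne hv, pW_eq_zero_of_not_adj hsupp fun hadj => hnot hadj.reachable,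
    mul_zero] at h
  exact h rfl

lemma min_lazyW_self (hnn : ∀ u v, 0 ≤ W u v) (hdy : 0 < dW W y) (hα : 1 / 2 ≤ α)
    (hxy : x ≠ y) : min (lazyW W α x x) (lazyW W α y x) = (1 - α) * pW W y x := by
  rw [lazyW_self, lazyW_of_ne hxy]
  refine min_eq_right ?_
  nlinarith [pW_nonneg hnn y x, pW_le_one hnn hdy x]

lemma min_lazyW_of_ne (hα : α ≤ 1) {u : V} (hux : u ≠ x) (huy : u ≠ y) :
    min (lazyW W α x u) (lazyW W α y u) = (1 - α) * min (pW W x u) (pW W y u) := by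
  rw [lazyW_of_ne hux, lazyW_of_ne huy, mul_min_of_nonneg _ _ (sub_nonneg.2 hα)]

lemma sum_compl_pair_min_pW [DecidableRel G.Adj] (hnn : ∀ u v, 0 ≤ W u v)
    (hsupp : ∀ u v, W u v ≠ 0 → G.Adj u v) :
    ∑ u ∈ {x, y}ᶜ, min (pW W x u) (pW W y u) =
      ∑ z ∈ G.neighborFinset x ∩ G.neighborFinset y, min (pW W x z) (pW W y z) := by
  symm
  refine sum_subset (fun z hz => ?_) (fun z _ hz => ?_)
  · simp only [mem_inter, SimpleGraph.mem_neighborFinset] at hz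
    simp only [mem_compl, mem_insert, mem_singleton, not_or]
    exact ⟨(G.ne_of_adj hz.1).symm, (G.ne_of_adj hz.2).symm⟩
  · simp only [mem_inter, SimpleGraph.mem_neighborFinset, not_and_or] at hz
    rcases hz with hx | hy
    · rw [pW_eq_zero_of_not_adj hsupp hx, min_eq_left (pW_nonneg hnn y z)]
    · rw [pW_eq_zero_of_not_adj hsupp hy, min_eq_right (pW_nonneg hnn x z)]

theorem sum_min_lazyW [DecidableRel G.Adj] (hnn : ∀ u v, 0 ≤ W u v)
    (hsupp : ∀ u v, W u v ≠ 0 → G.Adj u v) (hxy : G.Adj x y)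
    (hdx : 0 < dW W x) (hdy : 0 < dW W y) (hα2 : 1 / 2 ≤ α) (hα1 : α ≤ 1) :
    ∑ u, min (lazyW W α x u) (lazyW W α y u) = (1 - α) * Ov G W x y := by
  have hcompl : ∀ u ∈ ({x, y} : Finset V)ᶜ, min (lazyW W α x u) (lazyW W α y u) =
      (1 - α) * min (pW W x u) (pW W y u) := fun u hu => by
    simp only [mem_compl, mem_insert, mem_singleton, not_or] at hu
    exact min_lazyW_of_ne hα1 hu.1 hu.2
  rw [← sum_add_sum_compl {x, y}, sum_pair hxy.ne, min_lazyW_self hnn hdy hα2 hxy.ne,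
    min_comm, min_lazyW_self hnn hdx hα2 hxy.ne.symm, sum_congr rfl hcompl, ← mul_sum,
    sum_compl_pair_min_pW hnn hsupp, Ov]
  ring

end LazyMeasure

theorem overlap_upper_bound_general
    (G : SimpleGraph V) [DecidableRel G.Adj] (W : V → V → ℝ)
    (hnn : ∀ u v, 0 ≤ W u v)
    (hsupp : ∀ u v, W u v ≠ 0 → G.Adj u v)
    (x y : V) (hxy : G.Adj x y) (hdx : 0 < dW W x) (hdy : 0 < dW W y)
    (α : ℝ) (hα2 : 1/2 ≤ α) (hα1 : α < 1) :
    (∑ u, min (lazyW W α x u) (lazyW W α y u) = (1 - α) * Ov G W x y)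
    ∧ (∀ cpl : V × V → ℝ, IsCoupling cpl (lazyW W α x) (lazyW W α y) →
        1 - (1 - α) * Ov G W x y ≤ cost G cpl) := by
  have hov := sum_min_lazyW hnn hsupp hxy hdx hdy hα2 hα1.le
  refine ⟨hov, fun cpl hcpl => ?_⟩
  have hreach : ∀ u v, lazyW W α x u ≠ 0 → lazyW W α y v ≠ 0 → G.Reachable u v :=
    fun u v hu hv => (reachable_of_lazyW_ne_zero hsupp hu).symm.trans
      (hxy.reachable.trans (reachable_of_lazyW_ne_zero hsupp hv))
  have hmass : ∑ u, lazyW W α x u = 1 :=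
    sum_lazyW hdx.ne' (pW_eq_zero_of_not_adj hsupp (G.irrefl))
  simpa only [hmass, hov] using hcpl.sum_sub_sum_min_le_cost G hreach

/-- Deterministic overlap upper bound.
For a symmetric nonnegative weight `W` supported on the edges of `G`, an edge `{x,y}` with
positive weighted degrees, and `α ∈ [1/2,1)`: (i) the total overlap of the lazy measures equals
`(1−α)·Ov_{xy}(W)`; and (ii) every coupling of the lazy measures has transport cost at least
`1 − (1−α)·Ov_{xy}(W)`. -/
theorem overlap_upper_bound
    (G : SimpleGraph V) [DecidableRel G.Adj] (W : V → V → ℝ)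
    (hsymm : ∀ u v, W u v = W v u) (hnn : ∀ u v, 0 ≤ W u v)
    (hsupp : ∀ u v, W u v ≠ 0 → G.Adj u v)
    (x y : V) (hxy : G.Adj x y) (hdx : 0 < dW W x) (hdy : 0 < dW W y)
    (α : ℝ) (hα2 : 1/2 ≤ α) (hα1 : α < 1) :
    (∑ u, min (lazyW W α x u) (lazyW W α y u) = (1 - α) * Ov G W x y)
    ∧ (∀ cpl : V × V → ℝ, IsCoupling cpl (lazyW W α x) (lazyW W α y) →
        1 - (1 - α) * Ov G W x y ≤ cost G cpl) :=
  overlap_upper_bound_general G W hnn hsupp x y hxy hdx hdy α hα2 hα1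

end WeightedCurv
end

section
/- Let G be a finite simple graph and x a vertex with D_x ≥ 1. Let W and W' be symmetric weight functions on pairs of vertices, supported on the edges of G, with d_x(W) = ∑_u W_{xu} > 0 and d_x(W') = ∑_u W'_{xu} > 0, and suppose |W_{xu} − W'_{xu}| ≤ δ for every neighbor u of x. Then ∑_{u ∈ Γ(x)} | W_{xu}/d_x(W) − W'_{xu}/d_x(W') | ≤ 2·D_x·δ / d_x(W); equivalently, the total variation distance between the neighbor distributions p_{x,W} and p_{x,W'} is at most D_x·δ / d_x(W). -/
open Finset

namespace WeightedCurv

variable {V : Type*} [Fintype V] [DecidableEq V]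

/-- Splitting `a/A - b/B = (a - b)/A + b (A⁻¹ - B⁻¹)`, the second parts sum to
`B |A⁻¹ - B⁻¹| ≤ |A - B|/A`, where the case `B = 0` holds because `B⁻¹ = 0`. -/
theorem sum_abs_div_sum_sub_div_sum_le {ι : Type*} (s : Finset ι) {a b : ι → ℝ}
    (hb : ∀ i ∈ s, 0 ≤ b i) (hA : 0 < ∑ i ∈ s, a i) :
    ∑ i ∈ s, |a i / ∑ j ∈ s, a j - b i / ∑ j ∈ s, b j|
      ≤ 2 * (∑ i ∈ s, |a i - b i|) / ∑ i ∈ s, a i := by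
  set A := ∑ j ∈ s, a j
  set B := ∑ j ∈ s, b j
  have hAB : |A - B| ≤ ∑ i ∈ s, |a i - b i| := by
    rw [← sum_sub_distrib]
    exact abs_sum_le_sum_abs _ _
  have hscale : B * |A⁻¹ - B⁻¹| ≤ |A - B| / A := by
    rcases eq_or_ne B 0 with hB | hB
    · rw [hB, zero_mul]
      positivity
    · have hB' : 0 < B := (sum_nonneg hb).lt_of_ne' hB
      rw [inv_sub_inv hA.ne' hB, abs_div, abs_of_pos (mul_pos hA hB'), abs_sub_comm]
      field_simp
      rfl
  calc ∑ i ∈ s, |a i / A - b i / B|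
      ≤ ∑ i ∈ s, (|a i - b i| / A + b i * |A⁻¹ - B⁻¹|) := by
        refine sum_le_sum fun i hi => ?_
        calc |a i / A - b i / B| = |(a i - b i) / A + b i * (A⁻¹ - B⁻¹)| :=
            congrArg abs (by ring)
          _ ≤ |(a i - b i) / A| + |b i * (A⁻¹ - B⁻¹)| := abs_add_le _ _
          _ = |a i - b i| / A + b i * |A⁻¹ - B⁻¹| := by
            rw [abs_div, abs_of_pos hA, abs_mul, abs_of_nonneg (hb i hi)]
    _ = (∑ i ∈ s, |a i - b i|) / A + B * |A⁻¹ - B⁻¹| := by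
        rw [sum_add_distrib, ← sum_div, ← sum_mul]
    _ ≤ 2 * (∑ i ∈ s, |a i - b i|) / A := by
        rw [mul_div_assoc]
        linarith [div_le_div_of_nonneg_right hAB hA.le]

omit [DecidableEq V] in
theorem dW_eq_sum_neighborFinset (G : SimpleGraph V) [DecidableRel G.Adj] {W : V → V → ℝ}
    {x : V} (hsupp : ∀ v, W x v ≠ 0 → G.Adj x v) :
    dW W x = ∑ u ∈ G.neighborFinset x, W x u := by
  refine (sum_subset (subset_univ _) fun u _ hu => ?_).symm
  by_contra h
  exact hu ((G.mem_neighborFinset x u).2 (hsupp u h))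

theorem neighbour_distribution_stability_general
    (G : SimpleGraph V) [DecidableRel G.Adj] (W W' : V → V → ℝ)
    (hsupp : ∀ u v, W u v ≠ 0 → G.Adj u v)
    (hnn' : ∀ u v, 0 ≤ W' u v)
    (hsupp' : ∀ u v, W' u v ≠ 0 → G.Adj u v)
    (x : V)
    (hdx : 0 < dW W x)
    (δ : ℝ)
    (hδ : ∀ u ∈ G.neighborFinset x, |W x u - W' x u| ≤ δ) :
    (∑ u ∈ G.neighborFinset x, |pW W x u - pW W' x u|
        ≤ 2 * (G.degree x : ℝ) * δ / dW W x)
    ∧ ((1 / 2) * ∑ u ∈ G.neighborFinset x, |pW W x u - pW W' x u|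
        ≤ (G.degree x : ℝ) * δ / dW W x) := by
  have hd := dW_eq_sum_neighborFinset G (hsupp x)
  have hd' := dW_eq_sum_neighborFinset G (hsupp' x)
  have hdiff : ∑ u ∈ G.neighborFinset x, |W x u - W' x u| ≤ (G.degree x : ℝ) * δ := by
    simpa [G.card_neighborFinset_eq_degree] using sum_le_card_nsmul _ _ _ hδ
  have hdx₀ : 0 < ∑ u ∈ G.neighborFinset x, W x u := hd ▸ hdx
  have hL1 : ∑ u ∈ G.neighborFinset x, |pW W x u - pW W' x u|
      ≤ 2 * (G.degree x : ℝ) * δ / dW W x :=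
    calc ∑ u ∈ G.neighborFinset x, |pW W x u - pW W' x u|
        = ∑ u ∈ G.neighborFinset x, |W x u / ∑ v ∈ G.neighborFinset x, W x v
            - W' x u / ∑ v ∈ G.neighborFinset x, W' x v| := by simp only [pW, hd, hd']
      _ ≤ 2 * (∑ u ∈ G.neighborFinset x, |W x u - W' x u|) / ∑ v ∈ G.neighborFinset x, W x v :=
        sum_abs_div_sum_sub_div_sum_le _ (fun u _ => hnn' x u) hdx₀
      _ ≤ 2 * (G.degree x : ℝ) * δ / dW W x := by
        rw [hd, mul_assoc]
        gcongr
  refine ⟨hL1, ?_⟩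
  rw [mul_assoc, mul_div_assoc] at hL1
  linarith

/-- Stability of the neighbour distribution.
If two nonnegative symmetric edge-supported weights `W, W'` agree to within `δ` on the edges at
`x`, then `∑_{u∈Γ(x)} |p_{x,W}(u) − p_{x,W'}(u)| ≤ 2·D_x·δ/d_x(W)`; equivalently, the total
variation distance between the neighbour distributions is at most `D_x·δ/d_x(W)`. -/
theorem neighbour_distribution_stability
    (G : SimpleGraph V) [DecidableRel G.Adj] (W W' : V → V → ℝ)
    (hsymm : ∀ u v, W u v = W v u) (hnn : ∀ u v, 0 ≤ W u v)
    (hsupp : ∀ u v, W u v ≠ 0 → G.Adj u v)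
    (hsymm' : ∀ u v, W' u v = W' v u) (hnn' : ∀ u v, 0 ≤ W' u v)
    (hsupp' : ∀ u v, W' u v ≠ 0 → G.Adj u v)
    (x : V) (hDx : 1 ≤ G.degree x)
    (hdx : 0 < dW W x) (hdx' : 0 < dW W' x)
    (δ : ℝ)
    (hδ : ∀ u ∈ G.neighborFinset x, |W x u - W' x u| ≤ δ) :
    (∑ u ∈ G.neighborFinset x, |pW W x u - pW W' x u|
        ≤ 2 * (G.degree x : ℝ) * δ / dW W x)
    ∧ ((1 / 2) * ∑ u ∈ G.neighborFinset x, |pW W x u - pW W' x u|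
        ≤ (G.degree x : ℝ) * δ / dW W x) :=
  neighbour_distribution_stability_general G W W' hsupp hnn' hsupp' x hdx δ hδ

end WeightedCurv
end

section
/- Let W and W̃ be symmetric N×N real matrices with nonnegative entries, with row sums d_i = ∑_j W_{ij} and d̃_i = ∑_j W̃_{ij} satisfying min_i d_i ≥ m and min_i d̃_i ≥ m for some m > 0. Define the normalized Laplacians L(W) = I − D^{−1/2} W D^{−1/2} with D = diag(d_1,…,d_N), and similarly L(W̃) with D̃ = diag(d̃_1,…,d̃_N). Then, in the ℓ²→ℓ² operator norm, ‖L(W) − L(W̃)‖ ≤ (1/m)·‖W − W̃‖ + (max_i |d_i − d̃_i| / m²)·(‖W‖ + ‖W̃‖). -/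
/-!
With `S = D^{-1/2}` and `S' = D̃^{-1/2}`, one has
`L(W) − L(W̃) = S'W̃S' − SWS` and
`SWS − S'W̃S' = S(W − W̃)S + (S − S')W̃S + S'W̃(S − S')`.
Diagonal matrices have operator norm equal to the largest absolute value of their entries, so
`‖S‖, ‖S'‖ ≤ m^{-1/2}`, and the scalar estimate `|a^{-1/2} − b^{-1/2}| ≤ |a − b| / (2 m^{3/2})`
for `a, b ≥ m` gives `‖S − S'‖ ≤ max_i |d_i − d̃_i| / (2 m^{3/2})`.
-/

open scoped Matrix.Norms.L2Operator

namespace LapPerturb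

/-- Row sums (weighted degrees) of a matrix. -/
noncomputable def rowSum {N : ℕ} (W : Matrix (Fin N) (Fin N) ℝ) (i : Fin N) : ℝ := ∑ j, W i j

/-- Normalized Laplacian `L(W) = I − D^{−1/2} W D^{−1/2}`. -/
noncomputable def normLap {N : ℕ} (W : Matrix (Fin N) (Fin N) ℝ) : Matrix (Fin N) (Fin N) ℝ :=
  1 - Matrix.diagonal (fun i => (Real.sqrt (rowSum W i))⁻¹) * W *
      Matrix.diagonal (fun i => (Real.sqrt (rowSum W i))⁻¹)

lemma _root_.Real.abs_inv_sqrt_sub_inv_sqrt_le {m a b : ℝ} (hm : 0 < m) (ha : m ≤ a) (hb : m ≤ b) :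
    |(√a)⁻¹ - (√b)⁻¹| ≤ |a - b| / (2 * m * √m) := by
  have hsm : 0 < √m := Real.sqrt_pos.2 hm
  have hsa : √m ≤ √a := Real.sqrt_le_sqrt ha
  have hsb : √m ≤ √b := Real.sqrt_le_sqrt hb
  have hsa₀ : 0 < √a := hsm.trans_le hsa
  have hsb₀ : 0 < √b := hsm.trans_le hsb
  have hfactor : b - a = (√b - √a) * (√a + √b) := by
    linear_combination Real.sq_sqrt (hm.le.trans ha) - Real.sq_sqrt (hm.le.trans hb)
  have key : (√a)⁻¹ - (√b)⁻¹ = (b - a) / (√a * √b * (√a + √b)) := by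
    rw [inv_sub_inv hsa₀.ne' hsb₀.ne', hfactor]
    field_simp
  rw [key, abs_div, abs_sub_comm b a, abs_of_pos (by positivity : 0 < √a * √b * (√a + √b))]
  refine div_le_div_of_nonneg_left (abs_nonneg _) (by positivity) ?_
  calc 2 * m * √m = √m * √m * (√m + √m) := by rw [Real.mul_self_sqrt hm.le]; ring
    _ ≤ √a * √b * (√a + √b) := by gcongr

lemma _root_.Matrix.l2_opNorm_diagonal_le {𝕜 n : Type*} [RCLike 𝕜] [Fintype n] [DecidableEq n]
    {v : n → 𝕜} {c : ℝ} (hc : 0 ≤ c) (hv : ∀ i, ‖v i‖ ≤ c) :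
    ‖(Matrix.diagonal v : Matrix n n 𝕜)‖ ≤ c :=
  (Matrix.l2_opNorm_diagonal v).le.trans ((pi_norm_le_iff_of_nonneg hc).2 hv)

lemma _root_.norm_mul_mul_sub_mul_mul_le {R : Type*} [NonUnitalSeminormedRing R] {s s' w w' : R}
    {σ ε : ℝ} (hs : ‖s‖ ≤ σ) (hs' : ‖s'‖ ≤ σ) (hss' : ‖s - s'‖ ≤ ε) :
    ‖s * w * s - s' * w' * s'‖ ≤ σ ^ 2 * ‖w - w'‖ + 2 * σ * ε * ‖w'‖ := by
  have hσ : 0 ≤ σ := (norm_nonneg _).trans hs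
  have hε : 0 ≤ ε := (norm_nonneg _).trans hss'
  have hsplit : s * w * s - s' * w' * s'
      = s * (w - w') * s + (s - s') * w' * s + s' * w' * (s - s') := by
    simp only [mul_sub, sub_mul]; abel
  calc ‖s * w * s - s' * w' * s'‖
      ≤ ‖s‖ * ‖w - w'‖ * ‖s‖ + ‖s - s'‖ * ‖w'‖ * ‖s‖ + ‖s'‖ * ‖w'‖ * ‖s - s'‖ := by
        rw [hsplit]
        exact (norm_add₃_le).trans (add_le_add_three norm_mul₃_le norm_mul₃_le norm_mul₃_le)
    _ ≤ σ * ‖w - w'‖ * σ + ε * ‖w'‖ * σ + σ * ‖w'‖ * ε := by gcongr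
    _ = σ ^ 2 * ‖w - w'‖ + 2 * σ * ε * ‖w'‖ := by ring

noncomputable def invSqrtDegree {N : ℕ} (W : Matrix (Fin N) (Fin N) ℝ) : Matrix (Fin N) (Fin N) ℝ :=
  Matrix.diagonal fun i => (√(rowSum W i))⁻¹

lemma normLap_eq {N : ℕ} (W : Matrix (Fin N) (Fin N) ℝ) :
    normLap W = 1 - invSqrtDegree W * W * invSqrtDegree W := rfl

section Degree

variable {N : ℕ} {W W' : Matrix (Fin N) (Fin N) ℝ} {m : ℝ}

lemma norm_invSqrtDegree_le (hm : 0 < m) (hd : ∀ i, m ≤ rowSum W i) :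
    ‖invSqrtDegree W‖ ≤ (√m)⁻¹ := by
  refine Matrix.l2_opNorm_diagonal_le (by positivity) fun i => ?_
  have hsm : 0 < √m := Real.sqrt_pos.2 hm
  rw [Real.norm_of_nonneg (by positivity)]
  exact inv_anti₀ hsm (Real.sqrt_le_sqrt (hd i))

lemma norm_invSqrtDegree_sub_le {δ : ℝ} (hm : 0 < m) (hd : ∀ i, m ≤ rowSum W i)
    (hd' : ∀ i, m ≤ rowSum W' i) (hδ : ∀ i, |rowSum W i - rowSum W' i| ≤ δ) (hδ0 : 0 ≤ δ) :
    ‖invSqrtDegree W - invSqrtDegree W'‖ ≤ δ / (2 * m * √m) := by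
  rw [invSqrtDegree, invSqrtDegree, Matrix.diagonal_sub]
  refine Matrix.l2_opNorm_diagonal_le (by positivity) fun i => ?_
  rw [Real.norm_eq_abs]
  exact (Real.abs_inv_sqrt_sub_inv_sqrt_le hm (hd i) (hd' i)).trans (by gcongr; exact hδ i)

end Degree

theorem normalized_laplacian_perturbation_general
    (N : ℕ) (hN : 1 ≤ N) (W W' : Matrix (Fin N) (Fin N) ℝ)
    (m : ℝ) (hm : 0 < m)
    (hd : ∀ i, m ≤ rowSum W i) (hd' : ∀ i, m ≤ rowSum W' i) :
    ‖normLap W - normLap W'‖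
      ≤ (1 / m) * ‖W - W'‖
        + (Finset.univ.sup' (Finset.univ_nonempty_iff.mpr (Fin.pos_iff_nonempty.mp hN))
            (fun i => |rowSum W i - rowSum W' i|) / m ^ 2) * (‖W‖ + ‖W'‖) := by
  set δ := Finset.univ.sup' _ fun i => |rowSum W i - rowSum W' i|
  have hδ : ∀ i, |rowSum W i - rowSum W' i| ≤ δ := fun i =>
    Finset.le_sup' (fun i => |rowSum W i - rowSum W' i|) (Finset.mem_univ i)
  have hδ0 : 0 ≤ δ := (abs_nonneg _).trans (hδ ⟨0, hN⟩)
  rw [normLap_eq, normLap_eq, sub_sub_sub_cancel_left, norm_sub_rev]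
  calc _ ≤ (√m)⁻¹ ^ 2 * ‖W - W'‖ + 2 * (√m)⁻¹ * (δ / (2 * m * √m)) * ‖W'‖ :=
        norm_mul_mul_sub_mul_mul_le (norm_invSqrtDegree_le hm hd) (norm_invSqrtDegree_le hm hd')
          (norm_invSqrtDegree_sub_le hm hd hd' hδ hδ0)
    _ = 1 / m * ‖W - W'‖ + δ / m ^ 2 * ‖W'‖ := by
        field_simp
        rw [Real.sq_sqrt hm.le]
    _ ≤ _ := by gcongr; exact le_add_of_nonneg_left (norm_nonneg W)

/-- Normalized Laplacian perturbation for bounded degrees.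
For symmetric nonnegative matrices `W, W̃` with all row sums at least `m > 0`,
`‖L(W) − L(W̃)‖ ≤ ‖W − W̃‖/m + (max_i |d_i − d̃_i|/m²)·(‖W‖ + ‖W̃‖)` in the `ℓ²→ℓ²` operator
norm. -/
theorem normalized_laplacian_perturbation
    (N : ℕ) (hN : 1 ≤ N) (W W' : Matrix (Fin N) (Fin N) ℝ)
    (hWsym : W.IsSymm) (hW'sym : W'.IsSymm)
    (hWnn : ∀ i j, 0 ≤ W i j) (hW'nn : ∀ i j, 0 ≤ W' i j)
    (m : ℝ) (hm : 0 < m)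
    (hd : ∀ i, m ≤ rowSum W i) (hd' : ∀ i, m ≤ rowSum W' i) :
    ‖normLap W - normLap W'‖
      ≤ (1 / m) * ‖W - W'‖
        + (Finset.univ.sup' (Finset.univ_nonempty_iff.mpr (Fin.pos_iff_nonempty.mp hN))
            (fun i => |rowSum W i - rowSum W' i|) / m ^ 2) * (‖W‖ + ‖W'‖) :=
  normalized_laplacian_perturbation_general N hN W W' m hm hd hd'

end LapPerturb
end

section
/- Let G be a finite simple graph on vertex set V with a labeling σ : V → {1,2}, let 0 < b ≤ a, and let W be the two-level weight: W_{uv} = a if {u,v} is an edge with σ(u)=σ(v), W_{uv} = b if {u,v} is an edge with σ(u)≠σ(v), and W_{uv} = 0 otherwise. Let {x,y} be an edge with d_x(W) > 0 and d_y(W) > 0. Define U_x = Γ(x)\(Γ(y)∪{y}), U_y = Γ(y)\(Γ(x)∪{x}), the type sets U_in = U_x ∩ σ^{-1}(σ(x)), U_out = U_x \ σ^{-1}(σ(x)), V_in = U_y ∩ σ^{-1}(σ(y)), V_out = U_y \ σ^{-1}(σ(y)), the imbalance m(x,y) = | |U_in| − |V_in| | + | |U_out| − |V_out| |, the maximal neighbor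 probability p_max = max{ max_{u∈Γ(x)} W_{xu}/d_x(W), max_{v∈Γ(y)} W_{yv}/d_y(W) }, the degree mismatch Δ_deg = |d_x(W) − d_y(W)| / min{d_x(W), d_y(W)}, and the overlap Ov_{xy}(W) = p_{x,W}(y) + p_{y,W}(x) + ∑_{z∈Γ(x)∩Γ(y)} min{p_{x,W}(z), p_{y,W}(z)}. Assume that the bipartite graph formed by the edges of G between U_in and V_in contains a matching saturating the smaller of these two sets, and likewise for U_out and V_out. Then for every α ∈ [1/2, 1) there exists a coupling of m^α_{x,W} and m^α_{y,W} with transport cost at most 1 − (1−α)·Ov_{xy}(W) + 3(1−α)·( p_max·m(x,y) + 2·Δ_deg ). -/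
open Finset

namespace WeightedCurv

variable {V : Type*} [Fintype V] [DecidableEq V]

/-- Exclusive neighbourhood of `x` relative to the edge `{x,y}`. -/
def Uex (G : SimpleGraph V) [DecidableRel G.Adj] (x y : V) : Finset V :=
  G.neighborFinset x \ (insert y (G.neighborFinset y))

/-- The bipartite graph between `S` and `T` (with edges of `G`) has a matching saturating
the smaller of the two sets. -/
def SatMatching (G : SimpleGraph V) (S T : Finset V) : Prop :=
  (S.card ≤ T.card ∧ ∃ φ : V → V, Set.InjOn φ ↑S ∧ ∀ u ∈ S, φ u ∈ T ∧ G.Adj u (φ u)) ∨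
  (T.card ≤ S.card ∧ ∃ φ : V → V, Set.InjOn φ ↑T ∧ ∀ u ∈ T, φ u ∈ S ∧ G.Adj u (φ u))

set_option linter.unusedSectionVars false in
lemma satMatching_pairs (G : SimpleGraph V) (S T : Finset V) (h : SatMatching G S T) :
    ∃ Pr : Finset (V × V),
      (∀ p ∈ Pr, p.1 ∈ S ∧ p.2 ∈ T ∧ G.Adj p.1 p.2) ∧
      (∀ p ∈ Pr, ∀ q ∈ Pr, p.1 = q.1 → p = q) ∧
      (∀ p ∈ Pr, ∀ q ∈ Pr, p.2 = q.2 → p = q) ∧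
      Pr.card = min S.card T.card := by
  rcases h with ⟨hle, φ, hinj, hmem⟩ | ⟨hle, φ, hinj, hmem⟩
  · refine ⟨S.image (fun u => (u, φ u)), ?_, ?_, ?_, ?_⟩
    · intro p hp
      rcases Finset.mem_image.mp hp with ⟨u, hu, rfl⟩
      exact ⟨hu, (hmem u hu).1, (hmem u hu).2⟩
    · intro p hp q hq hpq
      rcases Finset.mem_image.mp hp with ⟨u, hu, rfl⟩
      rcases Finset.mem_image.mp hq with ⟨w, hw, rfl⟩
      simp_all
    · intro p hp q hq hpq
      rcases Finset.mem_image.mp hp with ⟨u, hu, rfl⟩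
      rcases Finset.mem_image.mp hq with ⟨w, hw, rfl⟩
      simp only at hpq
      have := hinj hu hw hpq
      simp_all
    · rw [Finset.card_image_of_injOn (fun u _ w _ h => by simpa using congrArg Prod.fst h),
        min_eq_left hle]
  · refine ⟨T.image (fun v => (φ v, v)), ?_, ?_, ?_, ?_⟩
    · intro p hp
      rcases Finset.mem_image.mp hp with ⟨v, hv, rfl⟩
      exact ⟨(hmem v hv).1, hv, (hmem v hv).2.symm⟩
    · intro p hp q hq hpq
      rcases Finset.mem_image.mp hp with ⟨u, hu, rfl⟩
      rcases Finset.mem_image.mp hq with ⟨w, hw, rfl⟩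
      simp only at hpq
      have := hinj hu hw hpq
      simp_all
    · intro p hp q hq hpq
      rcases Finset.mem_image.mp hp with ⟨u, hu, rfl⟩
      rcases Finset.mem_image.mp hq with ⟨w, hw, rfl⟩
      simp_all
    · rw [Finset.card_image_of_injOn (fun u _ w _ h => by simpa using congrArg Prod.snd h),
        min_eq_right hle]

set_option linter.unusedSectionVars false in
lemma dist_le_three (G : SimpleGraph V) {x y u v : V} (hxy : G.Adj x y)
    (hu : u = x ∨ G.Adj x u) (hv : v = y ∨ G.Adj y v) : (G.dist u v : ℝ) ≤ 3 := by
  have key : G.dist u v ≤ 3 := by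
    rcases hu with rfl | hu <;> rcases hv with rfl | hv
    · exact le_trans (SimpleGraph.dist_le (hxy.toWalk)) (by norm_num)
    · exact le_trans (SimpleGraph.dist_le (SimpleGraph.Walk.cons hxy hv.toWalk)) (by norm_num)
    · exact le_trans (SimpleGraph.dist_le (SimpleGraph.Walk.cons hu.symm hxy.toWalk)) (by norm_num)
    · exact le_trans (SimpleGraph.dist_le
        (SimpleGraph.Walk.cons hu.symm (SimpleGraph.Walk.cons hxy hv.toWalk))) (by norm_num)
  exact le_trans (Nat.cast_le.mpr key) (by norm_num)

set_option linter.unusedSectionVars false in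
lemma dist_le_one' (G : SimpleGraph V) {u v : V} (h : G.Adj u v) : (G.dist u v : ℝ) ≤ 1 := by
  have : G.dist u v ≤ 1 := le_trans (SimpleGraph.dist_le h.toWalk) (by norm_num)
  exact le_trans (Nat.cast_le.mpr this) (by norm_num)

set_option maxHeartbeats 2000000 in
/-- Overlap lower bound from type matchings, two-level case.
For the two-level weight `W` induced by a labelling `σ` and weights `0 < b ≤ a`, an edge `{x,y}`
with positive weighted degrees whose exclusive neighbourhoods admit matchings of each type, and
any `α ∈ [1/2,1)`, there is a coupling of the lazy measures with transport cost at most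
`1 − (1−α)·Ov_{xy}(W) + 3(1−α)·(p_max·m(x,y) + 2·Δ_deg)`. -/
theorem overlap_lower_bound_from_matchings
    (G : SimpleGraph V) [DecidableRel G.Adj] (σ : V → Fin 2) (a b : ℝ)
    (hb : 0 < b) (hba : b ≤ a)
    (W : V → V → ℝ)
    (hW : W = fun u v => if G.Adj u v then (if σ u = σ v then a else b) else 0)
    (x y : V) (hxy : G.Adj x y) (hdx : 0 < dW W x) (hdy : 0 < dW W y)
    (hmatch_in :
      SatMatching G ((Uex G x y).filter (fun u => σ u = σ x))
        ((Uex G y x).filter (fun v => σ v = σ y)))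
    (hmatch_out :
      SatMatching G ((Uex G x y).filter (fun u => σ u ≠ σ x))
        ((Uex G y x).filter (fun v => σ v ≠ σ y)))
    (α : ℝ) (hα2 : 1/2 ≤ α) (hα1 : α < 1) :
    ∃ cpl : V × V → ℝ, IsCoupling cpl (lazyW W α x) (lazyW W α y) ∧
      cost G cpl ≤
        1 - (1 - α) * Ov G W x y
          + 3 * (1 - α) *
            ((max
                ((G.neighborFinset x).sup'
                  ⟨y, (SimpleGraph.mem_neighborFinset G x y).mpr hxy⟩ (fun u => pW W x u))
                ((G.neighborFinset y).sup'
                  ⟨x, (SimpleGraph.mem_neighborFinset G y x).mpr hxy.symm⟩ (fun v => pW W y v)))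
              * (|((((Uex G x y).filter (fun u => σ u = σ x)).card : ℝ)
                    - (((Uex G y x).filter (fun v => σ v = σ y)).card : ℝ))|
                 + |((((Uex G x y).filter (fun u => σ u ≠ σ x)).card : ℝ)
                    - (((Uex G y x).filter (fun v => σ v ≠ σ y)).card : ℝ))|)
              + 2 * (|dW W x - dW W y| / min (dW W x) (dW W y))) := by
  classical
  obtain ⟨Pin, hPinMem, hPinFst, hPinSnd, hPinCard⟩ := satMatching_pairs G _ _ hmatch_in
  obtain ⟨Pout, hPoutMem, hPoutFst, hPoutSnd, hPoutCard⟩ := satMatching_pairs G _ _ hmatch_out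
  set Ux := Uex G x y with hUxdef
  set Uy := Uex G y x with hUydef
  set Uin := Ux.filter (fun u => σ u = σ x) with hUindef
  set Uout := Ux.filter (fun u => σ u ≠ σ x) with hUoutdef
  set Vin := Uy.filter (fun v => σ v = σ y) with hVindef
  set Vout := Uy.filter (fun v => σ v ≠ σ y) with hVoutdef
  set P := max
      ((G.neighborFinset x).sup'
        ⟨y, (SimpleGraph.mem_neighborFinset G x y).mpr hxy⟩ (fun u => pW W x u))
      ((G.neighborFinset y).sup'
        ⟨x, (SimpleGraph.mem_neighborFinset G y x).mpr hxy.symm⟩ (fun v => pW W y v)) with hPdef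
  set mm := |((Uin.card : ℝ) - (Vin.card : ℝ))| + |((Uout.card : ℝ) - (Vout.card : ℝ))| with hmmdef
  set Dg := |dW W x - dW W y| / min (dW W x) (dW W y) with hDgdef
  set C := G.neighborFinset x ∩ G.neighborFinset y with hCdef
  set Pr := Pin ∪ Pout with hPrdef
  set m1 : V → ℝ := lazyW W α x with hm1def
  set m2 : V → ℝ := lazyW W α y with hm2def
  set c : V → ℝ := fun u => min (m1 u) (m2 u) with hcdef
  set r1 : V → ℝ := fun u => m1 u - c u with hr1def
  set r2 : V → ℝ := fun u => m2 u - c u with hr2def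
  set Ax := ∑ z ∈ C, r1 z with hAxdef
  set Ay := ∑ z ∈ C, r2 z with hAydef
  set Ex := ∑ u ∈ Ux, r1 u with hExdef
  set Ey := ∑ v ∈ Uy, r2 v with hEydef
  set hh := min (r1 x - Ay) (r2 y - Ax) with hhdef
  set TT := ∑ p ∈ Pr, min (r1 p.1) (r2 p.2) with hTTdef
  set rowP : V → ℝ := fun u => ∑ v, (if (u, v) ∈ Pr then min (r1 u) (r2 v) else 0) with hrowdef
  set colP : V → ℝ := fun v => ∑ u, (if (u, v) ∈ Pr then min (r1 u) (r2 v) else 0) with hcoldef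
  set r1' : V → ℝ := fun u =>
    r1 u - ((if u = x then Ay + hh else 0) + (if u ∈ C then r1 u else 0) + rowP u) with hr1'def
  set r2' : V → ℝ := fun v =>
    r2 v - ((if v = y then Ax + hh else 0) + (if v ∈ C then r2 v else 0) + colP v) with hr2'def
  set ρ := ∑ u, r1' u with hρdef
  set π : V × V → ℝ := fun q =>
    (if q.1 = q.2 then c q.1 else 0) +
    ((if q.1 ∈ C ∧ q.2 = y then r1 q.1 else 0) +
    ((if q.1 = x ∧ q.2 ∈ C then r2 q.2 else 0) +
    ((if q.1 = x ∧ q.2 = y then hh else 0) +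
    ((if q ∈ Pr then min (r1 q.1) (r2 q.2) else 0) +
    (if ρ = 0 then 0 else r1' q.1 * r2' q.2 / ρ))))) with hπdef
  -- ### basic facts
  have hα0 : (0:ℝ) ≤ 1 - α := by linarith only [hα1]
  have hα0' : (0:ℝ) ≤ α := by linarith only [hα2]
  have hxny : x ≠ y := G.ne_of_adj hxy
  have hWnn : ∀ u v, 0 ≤ W u v := by
    intro u v; rw [hW]; dsimp only; split_ifs <;> linarith
  have hWadj : ∀ u v, ¬ G.Adj u v → W u v = 0 := by
    intro u v h; rw [hW]; simp [h]
  have hWval : ∀ u v, G.Adj u v → W u v = if σ u = σ v then a else b := by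
    intro u v h; rw [hW]; simp [h]
  have hWself : ∀ u, W u u = 0 := fun u => hWadj u u (G.irrefl)
  have hpnnx : ∀ z, 0 ≤ pW W x z := fun z => div_nonneg (hWnn x z) hdx.le
  have hpnny : ∀ z, 0 ≤ pW W y z := fun z => div_nonneg (hWnn y z) hdy.le
  have hWled : ∀ u v, W u v ≤ dW W u := by
    intro u v
    exact Finset.single_le_sum (fun i _ => hWnn u i) (Finset.mem_univ v)
  have hplex : ∀ z, pW W x z ≤ 1 := by
    intro z; rw [pW]; exact div_le_one_of_le₀ (hWled x z) hdx.le
  have hpley : ∀ z, pW W y z ≤ 1 := by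
    intro z; rw [pW]; exact div_le_one_of_le₀ (hWled y z) hdy.le
  have hpsumx : ∑ z, pW W x z = 1 := by
    simp only [pW]; rw [← Finset.sum_div]; exact div_self (ne_of_gt hdx)
  have hpsumy : ∑ z, pW W y z = 1 := by
    simp only [pW]; rw [← Finset.sum_div]; exact div_self (ne_of_gt hdy)
  have hpxx : pW W x x = 0 := by simp [pW, hWself]
  have hpyy : pW W y y = 0 := by simp [pW, hWself]
  have hm1 : ∀ v, m1 v = if v = x then α else (1 - α) * pW W x v := by
    intro v; rw [hm1def, lazyW]
  have hm2 : ∀ v, m2 v = if v = y then α else (1 - α) * pW W y v := by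
    intro v; rw [hm2def, lazyW]
  have hm1nn : ∀ v, 0 ≤ m1 v := by
    intro v; rw [hm1]; split_ifs
    · linarith only [hα2]
    · exact mul_nonneg hα0 (hpnnx v)
  have hm2nn : ∀ v, 0 ≤ m2 v := by
    intro v; rw [hm2]; split_ifs
    · linarith only [hα2]
    · exact mul_nonneg hα0 (hpnny v)
  have hm1sum : ∑ v, m1 v = 1 := by
    rw [← Finset.sum_erase_add _ _ (Finset.mem_univ x)]
    have h1 : ∑ v ∈ Finset.univ.erase x, m1 v = (1 - α) * (1 - pW W x x) := by
      rw [Finset.sum_congr rfl (fun v hv => by rw [hm1 v, if_neg (Finset.ne_of_mem_erase hv)]),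
        ← Finset.mul_sum, Finset.sum_erase_eq_sub (Finset.mem_univ x), hpsumx]
    rw [h1, hm1, if_pos rfl, hpxx]; ring
  have hm2sum : ∑ v, m2 v = 1 := by
    rw [← Finset.sum_erase_add _ _ (Finset.mem_univ y)]
    have h1 : ∑ v ∈ Finset.univ.erase y, m2 v = (1 - α) * (1 - pW W y y) := by
      rw [Finset.sum_congr rfl (fun v hv => by rw [hm2 v, if_neg (Finset.ne_of_mem_erase hv)]),
        ← Finset.mul_sum, Finset.sum_erase_eq_sub (Finset.mem_univ y), hpsumy]
    rw [h1, hm2, if_pos rfl, hpyy]; ring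
  have hm1x : m1 x = α := by rw [hm1, if_pos rfl]
  have hm2y : m2 y = α := by rw [hm2, if_pos rfl]
  have hm2x : m2 x = (1 - α) * pW W y x := by rw [hm2, if_neg hxny]
  have hm1y : m1 y = (1 - α) * pW W x y := by rw [hm1, if_neg hxny.symm]
  have hm2xle : m2 x ≤ α := by
    rw [hm2x]
    have h := mul_le_mul_of_nonneg_left (hpley x) hα0
    rw [mul_one] at h
    linarith only [h, hα2]
  have hm1yle : m1 y ≤ α := by
    rw [hm1y]
    have h := mul_le_mul_of_nonneg_left (hplex y) hα0
    rw [mul_one] at h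
    linarith only [h, hα2]
  have hcnn : ∀ u, 0 ≤ c u := fun u => le_min (hm1nn u) (hm2nn u)
  have hr1nn : ∀ u, 0 ≤ r1 u := by
    intro u; simp only [hr1def, hcdef]; have := min_le_left (m1 u) (m2 u); linarith
  have hr2nn : ∀ u, 0 ≤ r2 u := by
    intro u; simp only [hr2def, hcdef]; have := min_le_right (m1 u) (m2 u); linarith
  have hr1le : ∀ u, r1 u ≤ m1 u := by
    intro u; simp only [hr1def]; have := hcnn u; linarith
  have hr2le : ∀ u, r2 u ≤ m2 u := by
    intro u; simp only [hr2def]; have := hcnn u; linarith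
  have hcx : c x = (1 - α) * pW W y x := by
    simp only [hcdef]; rw [hm1x, min_eq_right hm2xle, hm2x]
  have hcy : c y = (1 - α) * pW W x y := by
    simp only [hcdef]; rw [hm2y, min_eq_left hm1yle, hm1y]
  have hr1x : r1 x = α - (1 - α) * pW W y x := by simp only [hr1def]; rw [hm1x, hcx]
  have hr2y : r2 y = α - (1 - α) * pW W x y := by simp only [hr2def]; rw [hm2y, hcy]
  have hr1y : r1 y = 0 := by simp only [hr1def]; rw [hcy, ← hm1y]; ring
  have hr2x : r2 x = 0 := by simp only [hr2def]; rw [hcx, ← hm2x]; ring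
  have hUxiff : ∀ u, u ∈ Ux ↔ G.Adj x u ∧ u ≠ y ∧ ¬ G.Adj y u := by
    intro u
    simp only [hUxdef, Uex, Finset.mem_sdiff, Finset.mem_insert,
      SimpleGraph.mem_neighborFinset]
    tauto
  have hUyiff : ∀ u, u ∈ Uy ↔ G.Adj y u ∧ u ≠ x ∧ ¬ G.Adj x u := by
    intro u
    simp only [hUydef, Uex, Finset.mem_sdiff, Finset.mem_insert,
      SimpleGraph.mem_neighborFinset]
    tauto
  have hCiff : ∀ z, z ∈ C ↔ G.Adj x z ∧ G.Adj y z := by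
    intro z; simp [hCdef, SimpleGraph.mem_neighborFinset]
  have hxC : x ∉ C := fun h => G.irrefl ((hCiff x).mp h).1
  have hyC : y ∉ C := fun h => G.irrefl ((hCiff y).mp h).2
  have hxUx : x ∉ Ux := fun h => G.irrefl ((hUxiff x).mp h).1
  have hyUy : y ∉ Uy := fun h => G.irrefl ((hUyiff y).mp h).1
  have hc0 : ∀ u, u ≠ x → u ≠ y → u ∉ C → c u = 0 := by
    intro u hux huy huC
    by_cases hadj : G.Adj x u
    · have hay : ¬ G.Adj y u := fun h => huC ((hCiff u).mpr ⟨hadj, h⟩)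
      have h2 : m2 u = 0 := by rw [hm2, if_neg huy, pW, hWadj y u hay]; simp
      simp only [hcdef]; rw [h2]; exact min_eq_right (hm1nn u)
    · have h1 : m1 u = 0 := by rw [hm1, if_neg hux, pW, hWadj x u hadj]; simp
      simp only [hcdef]; rw [h1]; exact min_eq_left (hm2nn u)
  have hr1Ux : ∀ u ∈ Ux, r1 u = (1 - α) * pW W x u := by
    intro u hu
    obtain ⟨h1, h2, h3⟩ := (hUxiff u).mp hu
    have hm2u : m2 u = 0 := by rw [hm2, if_neg h2, pW, hWadj y u h3]; simp
    have hcu : c u = 0 := by simp only [hcdef]; rw [hm2u]; exact min_eq_right (hm1nn u)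
    simp only [hr1def]; rw [hcu, hm1, if_neg h1.ne']; ring
  have hr2Uy : ∀ v ∈ Uy, r2 v = (1 - α) * pW W y v := by
    intro v hv
    obtain ⟨h1, h2, h3⟩ := (hUyiff v).mp hv
    have hm1v : m1 v = 0 := by rw [hm1, if_neg h2, pW, hWadj x v h3]; simp
    have hcv : c v = 0 := by simp only [hcdef]; rw [hm1v]; exact min_eq_left (hm2nn v)
    simp only [hr2def]; rw [hcv, hm2, if_neg h1.ne']; ring
  have hr1zero : ∀ u, u ≠ x → u ∉ C → u ∉ Ux → r1 u = 0 := by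
    intro u hux huC huUx
    by_cases huy : u = y
    · subst huy; exact hr1y
    by_cases hadj : G.Adj x u
    · have hay : ¬ G.Adj y u := fun h => huC ((hCiff u).mpr ⟨hadj, h⟩)
      exact absurd ((hUxiff u).mpr ⟨hadj, huy, hay⟩) huUx
    · have hm1u : m1 u = 0 := by rw [hm1, if_neg hux, pW, hWadj x u hadj]; simp
      have h1 := hr1le u; have h2 := hr1nn u; linarith only [h1, h2, hm1u]
  have hr2zero : ∀ v, v ≠ y → v ∉ C → v ∉ Uy → r2 v = 0 := by
    intro v hvy hvC hvUy
    by_cases hvx : v = x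
    · subst hvx; exact hr2x
    by_cases hadj : G.Adj y v
    · have hax : ¬ G.Adj x v := fun h => hvC ((hCiff v).mpr ⟨h, hadj⟩)
      exact absurd ((hUyiff v).mpr ⟨hadj, hvx, hax⟩) hvUy
    · have hm2v : m2 v = 0 := by rw [hm2, if_neg hvy, pW, hWadj y v hadj]; simp
      have h1 := hr2le v; have h2 := hr2nn v; linarith only [h1, h2, hm2v]
  have hsumc : ∑ u, c u = (1 - α) * Ov G W x y := by
    have hsub : ∑ u, c u = ∑ u ∈ insert x (insert y C), c u := by
      refine (Finset.sum_subset (Finset.subset_univ _) ?_).symm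
      intro u _ hu
      simp only [Finset.mem_insert] at hu
      push_neg at hu
      exact hc0 u hu.1 hu.2.1 hu.2.2
    have hxmem : x ∉ insert y C := by simp [hxny, hxC]
    rw [hsub, Finset.sum_insert hxmem, Finset.sum_insert hyC, hcx, hcy]
    have hcC : ∑ z ∈ C, c z = (1 - α) * ∑ z ∈ C, min (pW W x z) (pW W y z) := by
      rw [Finset.mul_sum]
      refine Finset.sum_congr rfl ?_
      intro z hz
      obtain ⟨h1, h2⟩ := (hCiff z).mp hz
      simp only [hcdef]
      rw [hm1, if_neg h1.ne', hm2, if_neg h2.ne']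
      rcases le_total (pW W x z) (pW W y z) with h | h
      · rw [min_eq_left h, min_eq_left (mul_le_mul_of_nonneg_left h hα0)]
      · rw [min_eq_right h, min_eq_right (mul_le_mul_of_nonneg_left h hα0)]
    rw [hcC, show Ov G W x y
        = pW W x y + pW W y x + ∑ z ∈ C, min (pW W x z) (pW W y z) from by rw [Ov, hCdef]]
    ring
  have hr1total : ∑ u, r1 u = 1 - (1 - α) * Ov G W x y := by
    simp only [hr1def]
    rw [Finset.sum_sub_distrib, hm1sum, hsumc]
  have hr2total : ∑ v, r2 v = 1 - (1 - α) * Ov G W x y := by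
    simp only [hr2def]
    rw [Finset.sum_sub_distrib, hm2sum, hsumc]
  have hCUx : Disjoint C Ux :=
    Finset.disjoint_left.mpr (fun u hu hux => ((hUxiff u).mp hux).2.2 ((hCiff u).mp hu).2)
  have hCUy : Disjoint C Uy :=
    Finset.disjoint_left.mpr (fun u hu huy => ((hUyiff u).mp huy).2.2 ((hCiff u).mp hu).1)
  have hxCUx : x ∉ C ∪ Ux := by simp [Finset.mem_union, hxC, hxUx]
  have hyCUy : y ∉ C ∪ Uy := by simp [Finset.mem_union, hyC, hyUy]
  have hr1sum : ∑ u, r1 u = r1 x + (Ax + Ex) := by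
    have hsub : ∑ u, r1 u = ∑ u ∈ insert x (C ∪ Ux), r1 u := by
      refine (Finset.sum_subset (Finset.subset_univ _) ?_).symm
      intro u _ hu
      simp only [Finset.mem_insert, Finset.mem_union] at hu
      push_neg at hu
      exact hr1zero u hu.1 hu.2.1 hu.2.2
    rw [hsub, Finset.sum_insert hxCUx, Finset.sum_union hCUx]
  have hr2sum : ∑ v, r2 v = r2 y + (Ay + Ey) := by
    have hsub : ∑ v, r2 v = ∑ v ∈ insert y (C ∪ Uy), r2 v := by
      refine (Finset.sum_subset (Finset.subset_univ _) ?_).symm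
      intro v _ hv
      simp only [Finset.mem_insert, Finset.mem_union] at hv
      push_neg at hv
      exact hr2zero v hv.1 hv.2.1 hv.2.2
    rw [hsub, Finset.sum_insert hyCUy, Finset.sum_union hCUy]
  have hAxle : Ax ≤ (1 - α) * (1 - pW W x y) := by
    have h1 : Ax ≤ ∑ z ∈ C, (1 - α) * pW W x z := by
      rw [hAxdef]
      refine Finset.sum_le_sum ?_
      intro z hz
      have h := hr1le z
      rw [hm1, if_neg (((hCiff z).mp hz).1).ne'] at h
      exact h
    rw [← Finset.mul_sum] at h1
    have h2 : ∑ z ∈ insert y C, pW W x z ≤ 1 := by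
      rw [← hpsumx]
      exact Finset.sum_le_sum_of_subset_of_nonneg (Finset.subset_univ _)
        (fun z _ _ => hpnnx z)
    rw [Finset.sum_insert hyC] at h2
    have h3 : ∑ z ∈ C, pW W x z ≤ 1 - pW W x y := by linarith only [h2]
    exact le_trans h1 (mul_le_mul_of_nonneg_left h3 hα0)
  have hAyle : Ay ≤ (1 - α) * (1 - pW W y x) := by
    have h1 : Ay ≤ ∑ z ∈ C, (1 - α) * pW W y z := by
      rw [hAydef]
      refine Finset.sum_le_sum ?_
      intro z hz
      have h := hr2le z
      rw [hm2, if_neg (((hCiff z).mp hz).2).ne'] at h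
      exact h
    rw [← Finset.mul_sum] at h1
    have h2 : ∑ z ∈ insert x C, pW W y z ≤ 1 := by
      rw [← hpsumy]
      exact Finset.sum_le_sum_of_subset_of_nonneg (Finset.subset_univ _)
        (fun z _ _ => hpnny z)
    rw [Finset.sum_insert hxC] at h2
    have h3 : ∑ z ∈ C, pW W y z ≤ 1 - pW W y x := by linarith only [h2]
    exact le_trans h1 (mul_le_mul_of_nonneg_left h3 hα0)
  have hhxAy : 0 ≤ r1 x - Ay := by
    rw [hr1x]
    have h : (1 - α) * (1 - pW W y x) = (1 - α) - (1 - α) * pW W y x := by ring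
    rw [h] at hAyle
    linarith only [hAyle, hα2]
  have hhyAx : 0 ≤ r2 y - Ax := by
    rw [hr2y]
    have h : (1 - α) * (1 - pW W x y) = (1 - α) - (1 - α) * pW W x y := by ring
    rw [h] at hAxle
    linarith only [hAxle, hα2]
  have hhnn : (0:ℝ) ≤ hh := by rw [hhdef]; exact le_min hhxAy hhyAx
  -- ### pair set facts
  have hPrMem : ∀ p ∈ Pr, p.1 ∈ Ux ∧ p.2 ∈ Uy ∧ G.Adj p.1 p.2 ∧ W x p.1 = W y p.2 := by
    intro p hp
    rw [hPrdef, Finset.mem_union] at hp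
    rcases hp with hp | hp
    · obtain ⟨h1, h2, h3⟩ := hPinMem p hp
      rw [hUindef, Finset.mem_filter] at h1
      rw [hVindef, Finset.mem_filter] at h2
      refine ⟨h1.1, h2.1, h3, ?_⟩
      rw [hWval x p.1 ((hUxiff p.1).mp h1.1).1, hWval y p.2 ((hUyiff p.2).mp h2.1).1,
        if_pos h1.2.symm, if_pos h2.2.symm]
    · obtain ⟨h1, h2, h3⟩ := hPoutMem p hp
      rw [hUoutdef, Finset.mem_filter] at h1
      rw [hVoutdef, Finset.mem_filter] at h2
      refine ⟨h1.1, h2.1, h3, ?_⟩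
      rw [hWval x p.1 ((hUxiff p.1).mp h1.1).1, hWval y p.2 ((hUyiff p.2).mp h2.1).1,
        if_neg (fun h => h1.2 h.symm), if_neg (fun h => h2.2 h.symm)]
  have hPrFst : ∀ p ∈ Pr, ∀ q ∈ Pr, p.1 = q.1 → p = q := by
    intro p hp q hq hpq
    rw [hPrdef, Finset.mem_union] at hp hq
    rcases hp with hp | hp <;> rcases hq with hq | hq
    · exact hPinFst p hp q hq hpq
    · exfalso
      have h1 := (hPinMem p hp).1; have h2 := (hPoutMem q hq).1
      rw [hUindef, Finset.mem_filter] at h1; rw [hUoutdef, Finset.mem_filter] at h2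
      exact h2.2 (hpq ▸ h1.2)
    · exfalso
      have h1 := (hPinMem q hq).1; have h2 := (hPoutMem p hp).1
      rw [hUindef, Finset.mem_filter] at h1; rw [hUoutdef, Finset.mem_filter] at h2
      exact h2.2 (hpq ▸ h1.2)
    · exact hPoutFst p hp q hq hpq
  have hPrSnd : ∀ p ∈ Pr, ∀ q ∈ Pr, p.2 = q.2 → p = q := by
    intro p hp q hq hpq
    rw [hPrdef, Finset.mem_union] at hp hq
    rcases hp with hp | hp <;> rcases hq with hq | hq
    · exact hPinSnd p hp q hq hpq
    · exfalso
      have h1 := (hPinMem p hp).2.1; have h2 := (hPoutMem q hq).2.1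
      rw [hVindef, Finset.mem_filter] at h1; rw [hVoutdef, Finset.mem_filter] at h2
      exact h2.2 (hpq ▸ h1.2)
    · exfalso
      have h1 := (hPinMem q hq).2.1; have h2 := (hPoutMem p hp).2.1
      rw [hVindef, Finset.mem_filter] at h1; rw [hVoutdef, Finset.mem_filter] at h2
      exact h2.2 (hpq ▸ h1.2)
    · exact hPoutSnd p hp q hq hpq
  have hrowPcases : ∀ u, rowP u = 0 ∨ ∃ v0, (u, v0) ∈ Pr ∧ rowP u = min (r1 u) (r2 v0) := by
    intro u
    by_cases hex : ∃ v, (u, v) ∈ Pr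
    · obtain ⟨v0, hv0⟩ := hex
      right; refine ⟨v0, hv0, ?_⟩
      simp only [hrowdef]
      rw [Finset.sum_eq_single v0]
      · rw [if_pos hv0]
      · intro v _ hne
        rw [if_neg]
        intro hmem
        exact hne (congrArg Prod.snd (hPrFst _ hmem _ hv0 rfl))
      · intro h; exact absurd (Finset.mem_univ v0) h
    · left
      simp only [hrowdef]
      exact Finset.sum_eq_zero (fun v _ => if_neg (fun h => hex ⟨v, h⟩))
  have hcolPcases : ∀ v, colP v = 0 ∨ ∃ u0, (u0, v) ∈ Pr ∧ colP v = min (r1 u0) (r2 v) := by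
    intro v
    by_cases hex : ∃ u, (u, v) ∈ Pr
    · obtain ⟨u0, hu0⟩ := hex
      right; refine ⟨u0, hu0, ?_⟩
      simp only [hcoldef]
      rw [Finset.sum_eq_single u0]
      · rw [if_pos hu0]
      · intro u _ hne
        rw [if_neg]
        intro hmem
        exact hne (congrArg Prod.fst (hPrSnd _ hmem _ hu0 rfl))
      · intro h; exact absurd (Finset.mem_univ u0) h
    · left
      simp only [hcoldef]
      exact Finset.sum_eq_zero (fun u _ => if_neg (fun h => hex ⟨u, h⟩))
  have hrowPnn : ∀ u, 0 ≤ rowP u := by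
    intro u
    rcases hrowPcases u with h | ⟨v0, _, h⟩
    · rw [h]
    · rw [h]; exact le_min (hr1nn u) (hr2nn v0)
  have hcolPnn : ∀ v, 0 ≤ colP v := by
    intro v
    rcases hcolPcases v with h | ⟨u0, _, h⟩
    · rw [h]
    · rw [h]; exact le_min (hr1nn u0) (hr2nn v)
  have hrowPler1 : ∀ u, rowP u ≤ r1 u := by
    intro u
    rcases hrowPcases u with h | ⟨v0, _, h⟩
    · rw [h]; exact hr1nn u
    · rw [h]; exact min_le_left _ _
  have hcolPler2 : ∀ v, colP v ≤ r2 v := by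
    intro v
    rcases hcolPcases v with h | ⟨u0, _, h⟩
    · rw [h]; exact hr2nn v
    · rw [h]; exact min_le_right _ _
  have hrowP0 : ∀ u, u ∉ Ux → rowP u = 0 := by
    intro u hu
    rcases hrowPcases u with h | ⟨v0, hv0, _⟩
    · exact h
    · exact absurd (hPrMem _ hv0).1 hu
  have hcolP0 : ∀ v, v ∉ Uy → colP v = 0 := by
    intro v hv
    rcases hcolPcases v with h | ⟨u0, hu0, _⟩
    · exact h
    · exact absurd (hPrMem _ hu0).2.1 hv
  have hr1'nn : ∀ u, 0 ≤ r1' u := by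
    intro u
    simp only [hr1'def]
    by_cases hux : u = x
    · subst hux
      rw [if_pos rfl, if_neg hxC, hrowP0 u hxUx]
      have h := min_le_left (r1 u - Ay) (r2 y - Ax)
      rw [← hhdef] at h
      linarith only [h]
    · rw [if_neg hux]
      by_cases huC : u ∈ C
      · rw [if_pos huC, hrowP0 u (Finset.disjoint_left.mp hCUx huC)]
        simp
      · rw [if_neg huC]
        have h := hrowPler1 u
        linarith only [h]
  have hr2'nn : ∀ v, 0 ≤ r2' v := by
    intro v
    simp only [hr2'def]
    by_cases hvy : v = y
    · subst hvy
      rw [if_pos rfl, if_neg hyC, hcolP0 v hyUy]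
      have h := min_le_right (r1 x - Ay) (r2 v - Ax)
      rw [← hhdef] at h
      linarith only [h]
    · rw [if_neg hvy]
      by_cases hvC : v ∈ C
      · rw [if_pos hvC, hcolP0 v (Finset.disjoint_left.mp hCUy hvC)]
        simp
      · rw [if_neg hvC]
        have h := hcolPler2 v
        linarith only [h]
  have hρnn : (0:ℝ) ≤ ρ := by
    rw [hρdef]; exact Finset.sum_nonneg (fun u _ => hr1'nn u)
  have hrowsum : ∑ u, rowP u = TT := by
    simp only [hrowdef]
    have h1 : ∑ u, ∑ v, (if (u, v) ∈ Pr then min (r1 u) (r2 v) else 0)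
        = ∑ q ∈ Finset.univ ×ˢ Finset.univ,
            (if q ∈ Pr then min (r1 q.1) (r2 q.2) else 0) := by
      rw [Finset.sum_product]
    rw [h1, Finset.univ_product_univ, Finset.sum_ite_mem, Finset.univ_inter, hTTdef]
  have hcolsum : ∑ v, colP v = TT := by
    simp only [hcoldef]
    rw [Finset.sum_comm]
    have h1 : ∑ u, ∑ v, (if (u, v) ∈ Pr then min (r1 u) (r2 v) else 0)
        = ∑ q ∈ Finset.univ ×ˢ Finset.univ,
            (if q ∈ Pr then min (r1 q.1) (r2 q.2) else 0) := by
      rw [Finset.sum_product]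
    rw [h1, Finset.univ_product_univ, Finset.sum_ite_mem, Finset.univ_inter, hTTdef]
  have hsum_r1'full : ρ = (∑ u, r1 u) - (Ay + hh) - Ax - TT := by
    rw [hρdef]
    simp only [hr1'def]
    rw [Finset.sum_sub_distrib, Finset.sum_add_distrib, Finset.sum_add_distrib, hrowsum,
      Finset.sum_ite_eq' Finset.univ x (fun _ => Ay + hh)]
    simp only [Finset.mem_univ, if_true]
    rw [Finset.sum_ite_mem, Finset.univ_inter, ← hAxdef]
    ring
  have hsum_r2'full : (∑ v, r2' v) = (∑ v, r2 v) - (Ax + hh) - Ay - TT := by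
    simp only [hr2'def]
    rw [Finset.sum_sub_distrib, Finset.sum_add_distrib, Finset.sum_add_distrib, hcolsum,
      Finset.sum_ite_eq' Finset.univ y (fun _ => Ax + hh)]
    simp only [Finset.mem_univ, if_true]
    rw [Finset.sum_ite_mem, Finset.univ_inter, ← hAydef]
    ring
  have hsum_r2' : ∑ v, r2' v = ρ := by
    rw [hsum_r2'full, hsum_r1'full, hr1total, hr2total]
    ring
  have hTTnn : (0:ℝ) ≤ TT := by
    rw [hTTdef]
    exact Finset.sum_nonneg (fun p _ => le_min (hr1nn _) (hr2nn _))
  have hAxnn : (0:ℝ) ≤ Ax := by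
    rw [hAxdef]; exact Finset.sum_nonneg (fun u _ => hr1nn u)
  have hAynn : (0:ℝ) ≤ Ay := by
    rw [hAydef]; exact Finset.sum_nonneg (fun u _ => hr2nn u)
  have hr1'le : ∀ u, r1' u ≤ r1 u := by
    intro u
    simp only [hr1'def]
    have h1 := hrowPnn u
    have h2 := hr1nn u
    split_ifs <;> linarith only [h1, h2, hAynn, hhnn]
  have hr2'le : ∀ v, r2' v ≤ r2 v := by
    intro v
    simp only [hr2'def]
    have h1 := hcolPnn v
    have h2 := hr2nn v
    split_ifs <;> linarith only [h1, h2, hAxnn, hhnn]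
  have hmarg1 : ∀ u, ∑ v, π (u, v) = m1 u := by
    intro u
    have e2 : ∑ v, (if u ∈ C ∧ v = y then r1 u else 0) = if u ∈ C then r1 u else 0 := by
      by_cases hu : u ∈ C <;> simp [hu]
    have e3 : ∑ v, (if u = x ∧ v ∈ C then r2 v else 0) = if u = x then Ay else 0 := by
      by_cases hu : u = x
      · rw [if_pos hu]
        simp only [hu, true_and]
        rw [Finset.sum_ite_mem, Finset.univ_inter, hAydef]
      · simp [hu]
    have e4 : ∑ v, (if u = x ∧ v = y then hh else 0) = if u = x then hh else 0 := by
      by_cases hu : u = x <;> simp [hu]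
    have e6 : ∑ v, (if ρ = 0 then 0 else r1' u * r2' v / ρ) = r1' u := by
      by_cases hρ0 : ρ = 0
      · simp only [if_pos hρ0, Finset.sum_const_zero]
        have hsum0 : ∑ w, r1' w = 0 := by rw [← hρdef]; exact hρ0
        exact ((Finset.sum_eq_zero_iff_of_nonneg (fun w _ => hr1'nn w)).mp hsum0
          u (Finset.mem_univ u)).symm
      · simp only [if_neg hρ0]
        rw [← Finset.sum_div, ← Finset.mul_sum, hsum_r2']
        field_simp
    have hsplit : ∑ v, π (u, v)
        = (∑ v, (if u = v then c u else 0))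
          + ((∑ v, (if u ∈ C ∧ v = y then r1 u else 0))
          + ((∑ v, (if u = x ∧ v ∈ C then r2 v else 0))
          + ((∑ v, (if u = x ∧ v = y then hh else 0))
          + ((∑ v, (if (u, v) ∈ Pr then min (r1 u) (r2 v) else 0))
          + (∑ v, (if ρ = 0 then 0 else r1' u * r2' v / ρ)))))) := by
      simp only [hπdef]
      rw [← Finset.sum_add_distrib, ← Finset.sum_add_distrib, ← Finset.sum_add_distrib,
        ← Finset.sum_add_distrib, ← Finset.sum_add_distrib]
    rw [hsplit, e2, e3, e4, e6]
    have e1 : ∑ v, (if u = v then c u else 0) = c u := by simp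
    have e5 : ∑ v, (if (u, v) ∈ Pr then min (r1 u) (r2 v) else 0) = rowP u := by
      simp only [hrowdef]
    rw [e1, e5]
    have hm1u : m1 u = c u + r1 u := by simp only [hr1def]; ring
    rw [hm1u]
    simp only [hr1'def]
    split_ifs <;> ring
  have hmarg2 : ∀ v, ∑ u, π (u, v) = m2 v := by
    intro v
    have e1 : ∑ u, (if u = v then c u else 0) = c v := by simp
    have e2 : ∑ u, (if u ∈ C ∧ v = y then r1 u else 0) = if v = y then Ax else 0 := by
      by_cases hv : v = y
      · rw [if_pos hv]
        simp only [hv, and_true]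
        rw [Finset.sum_ite_mem, Finset.univ_inter, hAxdef]
      · simp [hv]
    have e3 : ∑ u, (if u = x ∧ v ∈ C then r2 v else 0) = if v ∈ C then r2 v else 0 := by
      by_cases hv : v ∈ C <;> simp [hv]
    have e4 : ∑ u, (if u = x ∧ v = y then hh else 0) = if v = y then hh else 0 := by
      by_cases hv : v = y <;> simp [hv]
    have e6 : ∑ u, (if ρ = 0 then 0 else r1' u * r2' v / ρ) = r2' v := by
      by_cases hρ0 : ρ = 0
      · simp only [if_pos hρ0, Finset.sum_const_zero]
        have hsum0 : ∑ w, r2' w = 0 := by rw [hsum_r2']; exact hρ0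
        exact ((Finset.sum_eq_zero_iff_of_nonneg (fun w _ => hr2'nn w)).mp hsum0
          v (Finset.mem_univ v)).symm
      · simp only [if_neg hρ0]
        have h7 : (∑ u, r1' u) * r2' v / ρ = ∑ u, r1' u * r2' v / ρ := by
          rw [Finset.sum_mul, Finset.sum_div]
        rw [← h7, ← hρdef, mul_comm, mul_div_assoc, div_self hρ0, mul_one]
    have hsplit : ∑ u, π (u, v)
        = (∑ u, (if u = v then c u else 0))
          + ((∑ u, (if u ∈ C ∧ v = y then r1 u else 0))
          + ((∑ u, (if u = x ∧ v ∈ C then r2 v else 0))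
          + ((∑ u, (if u = x ∧ v = y then hh else 0))
          + ((∑ u, (if (u, v) ∈ Pr then min (r1 u) (r2 v) else 0))
          + (∑ u, (if ρ = 0 then 0 else r1' u * r2' v / ρ)))))) := by
      simp only [hπdef]
      rw [← Finset.sum_add_distrib, ← Finset.sum_add_distrib, ← Finset.sum_add_distrib,
        ← Finset.sum_add_distrib, ← Finset.sum_add_distrib]
    rw [hsplit, e1, e2, e3, e4, e6]
    have e5 : ∑ u, (if (u, v) ∈ Pr then min (r1 u) (r2 v) else 0) = colP v := by
      simp only [hcoldef]
    rw [e5]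
    have hm2v : m2 v = c v + r2 v := by simp only [hr2def]; ring
    rw [hm2v]
    simp only [hr2'def]
    split_ifs <;> ring
  have hπnn : ∀ q, 0 ≤ π q := by
    intro q
    simp only [hπdef]
    have h1 : (0:ℝ) ≤ if q.1 = q.2 then c q.1 else 0 := by
      split_ifs; exacts [hcnn _, le_refl 0]
    have h2 : (0:ℝ) ≤ if q.1 ∈ C ∧ q.2 = y then r1 q.1 else 0 := by
      split_ifs; exacts [hr1nn _, le_refl 0]
    have h3 : (0:ℝ) ≤ if q.1 = x ∧ q.2 ∈ C then r2 q.2 else 0 := by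
      split_ifs; exacts [hr2nn _, le_refl 0]
    have h4 : (0:ℝ) ≤ if q.1 = x ∧ q.2 = y then hh else 0 := by
      split_ifs; exacts [hhnn, le_refl 0]
    have h5 : (0:ℝ) ≤ if q ∈ Pr then min (r1 q.1) (r2 q.2) else 0 := by
      split_ifs with h
      · exact le_min (hr1nn _) (hr2nn _)
      · exact le_refl 0
    have h6 : (0:ℝ) ≤ if ρ = 0 then 0 else r1' q.1 * r2' q.2 / ρ := by
      split_ifs
      · exact le_refl 0
      · exact div_nonneg (mul_nonneg (hr1'nn _) (hr2'nn _)) hρnn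
    linarith only [h1, h2, h3, h4, h5, h6]
  have hsupp1 : ∀ u, r1' u ≠ 0 → (u = x ∨ G.Adj x u) := by
    intro u hne
    by_contra hcon
    push_neg at hcon
    have huC : u ∉ C := fun h => hcon.2 ((hCiff u).mp h).1
    have huUx : u ∉ Ux := fun h => hcon.2 ((hUxiff u).mp h).1
    have h0 := hr1zero u hcon.1 huC huUx
    have ha := hr1'nn u
    have hb := hr1'le u
    rw [h0] at hb
    exact hne (le_antisymm hb ha)
  have hsupp2 : ∀ v, r2' v ≠ 0 → (v = y ∨ G.Adj y v) := by
    intro v hne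
    by_contra hcon
    push_neg at hcon
    have hvC : v ∉ C := fun h => hcon.2 ((hCiff v).mp h).2
    have hvUy : v ∉ Uy := fun h => hcon.2 ((hUyiff v).mp h).1
    have h0 := hr2zero v hcon.1 hvC hvUy
    have ha := hr2'nn v
    have hb := hr2'le v
    rw [h0] at hb
    exact hne (le_antisymm hb ha)
  have hcost : cost G π ≤ Ax + Ay + hh + TT + 3 * ρ := by
    have hterm : ∀ q : V × V, π q * (G.dist q.1 q.2 : ℝ)
        ≤ (if q.1 ∈ C ∧ q.2 = y then r1 q.1 else 0)
          + ((if q.1 = x ∧ q.2 ∈ C then r2 q.2 else 0)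
          + ((if q.1 = x ∧ q.2 = y then hh else 0)
          + ((if q ∈ Pr then min (r1 q.1) (r2 q.2) else 0)
          + (if ρ = 0 then 0 else r1' q.1 * r2' q.2 * 3 / ρ)))) := by
      intro q
      obtain ⟨u, v⟩ := q
      simp only [hπdef]
      have t1 : (if u = v then c u else 0) * (G.dist u v : ℝ) = 0 := by
        split_ifs with h
        · subst h; rw [SimpleGraph.dist_self]; simp
        · rw [zero_mul]
      have t2 : (if u ∈ C ∧ v = y then r1 u else 0) * (G.dist u v : ℝ)
          ≤ (if u ∈ C ∧ v = y then r1 u else 0) := by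
        split_ifs with h
        · have hadj : G.Adj u v := by
            obtain ⟨hC', rfl⟩ := h
            exact (((hCiff u).mp hC').2).symm
          calc r1 u * (G.dist u v : ℝ) ≤ r1 u * 1 :=
                mul_le_mul_of_nonneg_left (dist_le_one' G hadj) (hr1nn u)
            _ = r1 u := mul_one _
        · rw [zero_mul]
      have t3 : (if u = x ∧ v ∈ C then r2 v else 0) * (G.dist u v : ℝ)
          ≤ (if u = x ∧ v ∈ C then r2 v else 0) := by
        split_ifs with h
        · have hadj : G.Adj u v := by
            obtain ⟨rfl, hC'⟩ := h
            exact ((hCiff v).mp hC').1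
          calc r2 v * (G.dist u v : ℝ) ≤ r2 v * 1 :=
                mul_le_mul_of_nonneg_left (dist_le_one' G hadj) (hr2nn v)
            _ = r2 v := mul_one _
        · rw [zero_mul]
      have t4 : (if u = x ∧ v = y then hh else 0) * (G.dist u v : ℝ)
          ≤ (if u = x ∧ v = y then hh else 0) := by
        split_ifs with h
        · have hadj : G.Adj u v := by
            obtain ⟨rfl, rfl⟩ := h
            exact hxy
          calc hh * (G.dist u v : ℝ) ≤ hh * 1 :=
                mul_le_mul_of_nonneg_left (dist_le_one' G hadj) hhnn
            _ = hh := mul_one _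
        · rw [zero_mul]
      have t5 : (if (u, v) ∈ Pr then min (r1 u) (r2 v) else 0) * (G.dist u v : ℝ)
          ≤ (if (u, v) ∈ Pr then min (r1 u) (r2 v) else 0) := by
        split_ifs with h
        · have hadj : G.Adj u v := (hPrMem _ h).2.2.1
          calc min (r1 u) (r2 v) * (G.dist u v : ℝ) ≤ min (r1 u) (r2 v) * 1 :=
                mul_le_mul_of_nonneg_left (dist_le_one' G hadj)
                  (le_min (hr1nn u) (hr2nn v))
            _ = min (r1 u) (r2 v) := mul_one _
        · rw [zero_mul]
      have t6 : (if ρ = 0 then 0 else r1' u * r2' v / ρ) * (G.dist u v : ℝ)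
          ≤ (if ρ = 0 then 0 else r1' u * r2' v * 3 / ρ) := by
        split_ifs with h
        · rw [zero_mul]
        · by_cases h1 : r1' u = 0
          · rw [h1]; simp
          · by_cases h2 : r2' v = 0
            · rw [h2]; simp
            · have hd3 := dist_le_three G hxy (hsupp1 u h1) (hsupp2 v h2)
              have hf : 0 ≤ r1' u * r2' v / ρ :=
                div_nonneg (mul_nonneg (hr1'nn u) (hr2'nn v)) hρnn
              calc r1' u * r2' v / ρ * (G.dist u v : ℝ) ≤ r1' u * r2' v / ρ * 3 :=
                    mul_le_mul_of_nonneg_left hd3 hf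
                _ = r1' u * r2' v * 3 / ρ := by ring
      have expand : ((if u = v then c u else 0) +
          ((if u ∈ C ∧ v = y then r1 u else 0) +
          ((if u = x ∧ v ∈ C then r2 v else 0) +
          ((if u = x ∧ v = y then hh else 0) +
          ((if (u, v) ∈ Pr then min (r1 u) (r2 v) else 0) +
          (if ρ = 0 then 0 else r1' u * r2' v / ρ)))))) * (G.dist u v : ℝ)
          = (if u = v then c u else 0) * (G.dist u v : ℝ)
            + ((if u ∈ C ∧ v = y then r1 u else 0) * (G.dist u v : ℝ)
            + ((if u = x ∧ v ∈ C then r2 v else 0) * (G.dist u v : ℝ)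
            + ((if u = x ∧ v = y then hh else 0) * (G.dist u v : ℝ)
            + ((if (u, v) ∈ Pr then min (r1 u) (r2 v) else 0) * (G.dist u v : ℝ)
            + (if ρ = 0 then 0 else r1' u * r2' v / ρ) * (G.dist u v : ℝ))))) := by
        ring
      rw [expand]
      linarith only [t1, t2, t3, t4, t5, t6]
    have e2' : ∑ q : V × V, (if q.1 ∈ C ∧ q.2 = y then r1 q.1 else 0) = Ax := by
      rw [Fintype.sum_prod_type]
      have h9 : ∀ u, (∑ v, if u ∈ C ∧ v = y then r1 u else 0)
          = if u ∈ C then r1 u else 0 := by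
        intro u; by_cases hu : u ∈ C <;> simp [hu]
      rw [Finset.sum_congr rfl (fun u _ => h9 u), Finset.sum_ite_mem,
        Finset.univ_inter, hAxdef]
    have e3' : ∑ q : V × V, (if q.1 = x ∧ q.2 ∈ C then r2 q.2 else 0) = Ay := by
      rw [Fintype.sum_prod_type]
      have h9 : ∀ u, (∑ v, if u = x ∧ v ∈ C then r2 v else 0)
          = if u = x then Ay else 0 := by
        intro u
        by_cases hu : u = x
        · rw [if_pos hu]
          simp only [hu, true_and]
          rw [Finset.sum_ite_mem, Finset.univ_inter, hAydef]
        · simp [hu]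
      rw [Finset.sum_congr rfl (fun u _ => h9 u), Finset.sum_ite_eq' Finset.univ x]
      simp
    have e4' : ∑ q : V × V, (if q.1 = x ∧ q.2 = y then hh else 0) = hh := by
      rw [Fintype.sum_prod_type]
      have h9 : ∀ u, (∑ v, if u = x ∧ v = y then hh else 0)
          = if u = x then hh else 0 := by
        intro u; by_cases hu : u = x <;> simp [hu]
      rw [Finset.sum_congr rfl (fun u _ => h9 u), Finset.sum_ite_eq' Finset.univ x]
      simp
    have e5' : ∑ q : V × V, (if q ∈ Pr then min (r1 q.1) (r2 q.2) else 0) = TT := by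
      rw [Finset.sum_ite_mem, Finset.univ_inter, hTTdef]
    have e6' : ∑ q : V × V, (if ρ = 0 then 0 else r1' q.1 * r2' q.2 * 3 / ρ) = 3 * ρ := by
      by_cases hρ0 : ρ = 0
      · simp [hρ0]
      · simp only [if_neg hρ0]
        rw [Fintype.sum_prod_type]
        have h9 : ∀ u : V, (∑ v, r1' u * r2' v * 3 / ρ) = r1' u * 3 := by
          intro u
          calc ∑ v, r1' u * r2' v * 3 / ρ = ∑ v, (r1' u * 3 / ρ) * r2' v := by
                refine Finset.sum_congr rfl ?_
                intro v _; ring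
            _ = (r1' u * 3 / ρ) * ∑ v, r2' v := by rw [Finset.mul_sum]
            _ = (r1' u * 3 / ρ) * ρ := by rw [hsum_r2']
            _ = r1' u * 3 := by field_simp
        rw [Finset.sum_congr rfl (fun u _ => h9 u), ← Finset.sum_mul, ← hρdef]
        ring
    calc cost G π ≤ ∑ q : V × V, ((if q.1 ∈ C ∧ q.2 = y then r1 q.1 else 0)
          + ((if q.1 = x ∧ q.2 ∈ C then r2 q.2 else 0)
          + ((if q.1 = x ∧ q.2 = y then hh else 0)
          + ((if q ∈ Pr then min (r1 q.1) (r2 q.2) else 0)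
          + (if ρ = 0 then 0 else r1' q.1 * r2' q.2 * 3 / ρ))))) := by
          rw [cost]
          exact Finset.sum_le_sum (fun q _ => hterm q)
      _ = Ax + Ay + hh + TT + 3 * ρ := by
          rw [Finset.sum_add_distrib, Finset.sum_add_distrib, Finset.sum_add_distrib,
            Finset.sum_add_distrib, e2', e3', e4', e5', e6']
          ring
  have hbalance : Ax + Ay + hh + TT = (1 - (1 - α) * Ov G W x y) - ρ := by
    have h := hsum_r1'full
    rw [hr1total] at h
    linarith only [h]
  -- estimate machinery
  have hPx : ∀ u, G.Adj x u → pW W x u ≤ P := by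
    intro u hu
    rw [hPdef]
    exact le_trans (Finset.le_sup' (fun w => pW W x w)
      ((SimpleGraph.mem_neighborFinset G x u).mpr hu)) (le_max_left _ _)
  have hPy : ∀ v, G.Adj y v → pW W y v ≤ P := by
    intro v hv
    rw [hPdef]
    exact le_trans (Finset.le_sup' (fun w => pW W y w)
      ((SimpleGraph.mem_neighborFinset G y v).mpr hv)) (le_max_right _ _)
  have hPnn : (0:ℝ) ≤ P := le_trans (hpnnx y) (hPx y hxy)
  have hABpos : (0:ℝ) < dW W x * dW W y := mul_pos hdx hdy
  have himg1 : Pr.image Prod.fst ⊆ Ux := by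
    intro u hu
    obtain ⟨p, hp, rfl⟩ := Finset.mem_image.mp hu
    exact (hPrMem p hp).1
  have himg2 : Pr.image Prod.snd ⊆ Uy := by
    intro v hv
    obtain ⟨p, hp, rfl⟩ := Finset.mem_image.mp hv
    exact (hPrMem p hp).2.1
  have hdisjInOut : Disjoint Pin Pout := by
    rw [Finset.disjoint_left]
    intro p hp1 hp2
    have h1 := (hPinMem p hp1).1
    have h2 := (hPoutMem p hp2).1
    rw [hUindef, Finset.mem_filter] at h1
    rw [hUoutdef, Finset.mem_filter] at h2
    exact h2.2 h1.2
  have hPrcard : Pr.card = Pin.card + Pout.card := by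
    rw [hPrdef, Finset.card_union_of_disjoint hdisjInOut]
  have himg1card : (Pr.image Prod.fst).card = Pr.card :=
    Finset.card_image_of_injOn
      (fun p hp q hq h => hPrFst p (Finset.mem_coe.mp hp) q (Finset.mem_coe.mp hq) h)
  have himg2card : (Pr.image Prod.snd).card = Pr.card :=
    Finset.card_image_of_injOn
      (fun p hp q hq h => hPrSnd p (Finset.mem_coe.mp hp) q (Finset.mem_coe.mp hq) h)
  have hUxcard : Ux.card = Uin.card + Uout.card := by
    rw [hUindef, hUoutdef]
    exact (Finset.card_filter_add_card_filter_not
      (s := Ux) (p := fun u => σ u = σ x)).symm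
  have hUycard : Uy.card = Vin.card + Vout.card := by
    rw [hVindef, hVoutdef]
    exact (Finset.card_filter_add_card_filter_not
      (s := Uy) (p := fun v => σ v = σ y)).symm
  have hkin1 : (Uin.card:ℝ) - min (Uin.card:ℝ) (Vin.card:ℝ)
      ≤ |(Uin.card:ℝ) - (Vin.card:ℝ)| := by
    rcases le_total (Uin.card:ℝ) (Vin.card:ℝ) with h | h
    · rw [min_eq_left h]; simpa using abs_nonneg ((Uin.card:ℝ) - (Vin.card:ℝ))
    · rw [min_eq_right h]; exact le_abs_self _
  have hkin2 : (Vin.card:ℝ) - min (Uin.card:ℝ) (Vin.card:ℝ)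
      ≤ |(Uin.card:ℝ) - (Vin.card:ℝ)| := by
    rcases le_total (Uin.card:ℝ) (Vin.card:ℝ) with h | h
    · rw [min_eq_left h, ← abs_sub_comm]; exact le_abs_self _
    · rw [min_eq_right h]; simpa using abs_nonneg ((Uin.card:ℝ) - (Vin.card:ℝ))
  have hkout1 : (Uout.card:ℝ) - min (Uout.card:ℝ) (Vout.card:ℝ)
      ≤ |(Uout.card:ℝ) - (Vout.card:ℝ)| := by
    rcases le_total (Uout.card:ℝ) (Vout.card:ℝ) with h | h
    · rw [min_eq_left h]; simpa using abs_nonneg ((Uout.card:ℝ) - (Vout.card:ℝ))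
    · rw [min_eq_right h]; exact le_abs_self _
  have hkout2 : (Vout.card:ℝ) - min (Uout.card:ℝ) (Vout.card:ℝ)
      ≤ |(Uout.card:ℝ) - (Vout.card:ℝ)| := by
    rcases le_total (Uout.card:ℝ) (Vout.card:ℝ) with h | h
    · rw [min_eq_left h, ← abs_sub_comm]; exact le_abs_self _
    · rw [min_eq_right h]; simpa using abs_nonneg ((Uout.card:ℝ) - (Vout.card:ℝ))
  have hcard1 : ((Ux \ Pr.image Prod.fst).card : ℝ) ≤ mm := by
    rw [Finset.card_sdiff_of_subset himg1, Nat.cast_sub (Finset.card_le_card himg1), himg1card,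
      hPrcard, hUxcard, hPinCard, hPoutCard, hmmdef]
    push_cast
    linarith only [hkin1, hkout1]
  have hcard2 : ((Uy \ Pr.image Prod.snd).card : ℝ) ≤ mm := by
    rw [Finset.card_sdiff_of_subset himg2, Nat.cast_sub (Finset.card_le_card himg2), himg2card,
      hPrcard, hUycard, hPinCard, hPoutCard, hmmdef]
    push_cast
    linarith only [hkin2, hkout2]
  have hEsplit1 : Ex = (∑ p ∈ Pr, r1 p.1) + ∑ u ∈ Ux \ Pr.image Prod.fst, r1 u := by
    rw [hExdef, ← Finset.sum_sdiff himg1, Finset.sum_image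
      (fun p hp q hq h => hPrFst p hp q hq h)]
    ring
  have hEsplit2 : Ey = (∑ p ∈ Pr, r2 p.2) + ∑ v ∈ Uy \ Pr.image Prod.snd, r2 v := by
    rw [hEydef, ← Finset.sum_sdiff himg2, Finset.sum_image
      (fun p hp q hq h => hPrSnd p hp q hq h)]
    ring
  have hpair1 : ∀ p ∈ Pr, r1 p.1 - min (r1 p.1) (r2 p.2)
      ≤ (1 - α) * (W x p.1 * |dW W x - dW W y| / (dW W x * dW W y)) := by
    intro p hp
    obtain ⟨h1, h2, _, h4⟩ := hPrMem p hp
    have hRnn : (0:ℝ) ≤ W x p.1 * |dW W x - dW W y| / (dW W x * dW W y) :=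
      div_nonneg (mul_nonneg (hWnn x p.1) (abs_nonneg _)) hABpos.le
    rw [hr1Ux p.1 h1, hr2Uy p.2 h2]
    simp only [pW]
    rw [← h4]
    rcases le_total (W x p.1 / dW W x) (W x p.1 / dW W y) with h | h
    · rw [min_eq_left (mul_le_mul_of_nonneg_left h hα0)]
      have := mul_nonneg hα0 hRnn
      linarith only [this]
    · rw [min_eq_right (mul_le_mul_of_nonneg_left h hα0)]
      have heq : (1 - α) * (W x p.1 / dW W x) - (1 - α) * (W x p.1 / dW W y)
          = (1 - α) * (W x p.1 * (dW W y - dW W x) / (dW W x * dW W y)) := by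
        field_simp
      rw [heq]
      refine mul_le_mul_of_nonneg_left ?_ hα0
      refine (div_le_div_iff_of_pos_right hABpos).mpr ?_
      refine mul_le_mul_of_nonneg_left ?_ (hWnn x p.1)
      rw [abs_sub_comm]
      exact le_abs_self _
  have hpair2 : ∀ p ∈ Pr, r2 p.2 - min (r1 p.1) (r2 p.2)
      ≤ (1 - α) * (W y p.2 * |dW W x - dW W y| / (dW W x * dW W y)) := by
    intro p hp
    obtain ⟨h1, h2, _, h4⟩ := hPrMem p hp
    have hRnn : (0:ℝ) ≤ W y p.2 * |dW W x - dW W y| / (dW W x * dW W y) :=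
      div_nonneg (mul_nonneg (hWnn y p.2) (abs_nonneg _)) hABpos.le
    rw [hr1Ux p.1 h1, hr2Uy p.2 h2]
    simp only [pW]
    rw [h4]
    rcases le_total (W y p.2 / dW W y) (W y p.2 / dW W x) with h | h
    · rw [min_eq_right (mul_le_mul_of_nonneg_left h hα0)]
      have := mul_nonneg hα0 hRnn
      linarith only [this]
    · rw [min_eq_left (mul_le_mul_of_nonneg_left h hα0)]
      have heq : (1 - α) * (W y p.2 / dW W y) - (1 - α) * (W y p.2 / dW W x)
          = (1 - α) * (W y p.2 * (dW W x - dW W y) / (dW W x * dW W y)) := by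
        field_simp
      rw [heq]
      refine mul_le_mul_of_nonneg_left ?_ hα0
      refine (div_le_div_iff_of_pos_right hABpos).mpr ?_
      exact mul_le_mul_of_nonneg_left (le_abs_self _) (hWnn y p.2)
  have hwsum1 : ∑ p ∈ Pr, W x p.1 ≤ dW W x := by
    have himgsum : ∑ u ∈ Pr.image Prod.fst, W x u = ∑ p ∈ Pr, W x p.1 :=
      Finset.sum_image (fun p hp q hq h => hPrFst p hp q hq h)
    rw [← himgsum, dW]
    exact Finset.sum_le_sum_of_subset_of_nonneg (Finset.subset_univ _)
      (fun u _ _ => hWnn x u)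
  have hwsum2 : ∑ p ∈ Pr, W y p.2 ≤ dW W y := by
    have himgsum : ∑ v ∈ Pr.image Prod.snd, W y v = ∑ p ∈ Pr, W y p.2 :=
      Finset.sum_image (fun p hp q hq h => hPrSnd p hp q hq h)
    rw [← himgsum, dW]
    exact Finset.sum_le_sum_of_subset_of_nonneg (Finset.subset_univ _)
      (fun v _ _ => hWnn y v)
  have hfracnn : (0:ℝ) ≤ (1 - α) * (|dW W x - dW W y| / (dW W x * dW W y)) :=
    mul_nonneg hα0 (div_nonneg (abs_nonneg _) hABpos.le)
  have hpairsum1 : (∑ p ∈ Pr, r1 p.1) - TT ≤ (1 - α) * Dg := by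
    have h1 : ∑ p ∈ Pr, (r1 p.1 - min (r1 p.1) (r2 p.2))
        = (∑ p ∈ Pr, r1 p.1) - TT := by
      rw [hTTdef]; exact Finset.sum_sub_distrib _ _
    have h2 := Finset.sum_le_sum hpair1
    have h3 : ∑ p ∈ Pr, (1 - α) * (W x p.1 * |dW W x - dW W y| / (dW W x * dW W y))
        = (1 - α) * (|dW W x - dW W y| / (dW W x * dW W y)) * ∑ p ∈ Pr, W x p.1 := by
      rw [Finset.mul_sum]
      refine Finset.sum_congr rfl ?_
      intro p _; ring
    have h5 : (1 - α) * (|dW W x - dW W y| / (dW W x * dW W y)) * ∑ p ∈ Pr, W x p.1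
        ≤ (1 - α) * (|dW W x - dW W y| / (dW W x * dW W y)) * dW W x :=
      mul_le_mul_of_nonneg_left hwsum1 hfracnn
    have h6 : (1 - α) * (|dW W x - dW W y| / (dW W x * dW W y)) * dW W x
        = (1 - α) * (|dW W x - dW W y| / dW W y) := by
      field_simp
    have h7 : |dW W x - dW W y| / dW W y ≤ Dg := by
      rw [hDgdef]
      exact div_le_div_of_nonneg_left (abs_nonneg _) (lt_min hdx hdy) (min_le_right _ _)
    have h8 := mul_le_mul_of_nonneg_left h7 hα0
    rw [← h1]
    rw [h3] at h2
    linarith only [h2, h5, h6, h8]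
  have hpairsum2 : (∑ p ∈ Pr, r2 p.2) - TT ≤ (1 - α) * Dg := by
    have h1 : ∑ p ∈ Pr, (r2 p.2 - min (r1 p.1) (r2 p.2))
        = (∑ p ∈ Pr, r2 p.2) - TT := by
      rw [hTTdef]; exact Finset.sum_sub_distrib _ _
    have h2 := Finset.sum_le_sum hpair2
    have h3 : ∑ p ∈ Pr, (1 - α) * (W y p.2 * |dW W x - dW W y| / (dW W x * dW W y))
        = (1 - α) * (|dW W x - dW W y| / (dW W x * dW W y)) * ∑ p ∈ Pr, W y p.2 := by
      rw [Finset.mul_sum]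
      refine Finset.sum_congr rfl ?_
      intro p _; ring
    have h5 : (1 - α) * (|dW W x - dW W y| / (dW W x * dW W y)) * ∑ p ∈ Pr, W y p.2
        ≤ (1 - α) * (|dW W x - dW W y| / (dW W x * dW W y)) * dW W y :=
      mul_le_mul_of_nonneg_left hwsum2 hfracnn
    have h6 : (1 - α) * (|dW W x - dW W y| / (dW W x * dW W y)) * dW W y
        = (1 - α) * (|dW W x - dW W y| / dW W x) := by
      field_simp
    have h7 : |dW W x - dW W y| / dW W x ≤ Dg := by
      rw [hDgdef]
      exact div_le_div_of_nonneg_left (abs_nonneg _) (lt_min hdx hdy) (min_le_left _ _)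
    have h8 := mul_le_mul_of_nonneg_left h7 hα0
    rw [← h1]
    rw [h3] at h2
    linarith only [h2, h5, h6, h8]
  have hunm1 : ∑ u ∈ Ux \ Pr.image Prod.fst, r1 u ≤ (1 - α) * P * mm := by
    have hb' : ∀ u ∈ Ux \ Pr.image Prod.fst, r1 u ≤ (1 - α) * P := by
      intro u hu
      have huUx : u ∈ Ux := (Finset.mem_sdiff.mp hu).1
      rw [hr1Ux u huUx]
      exact mul_le_mul_of_nonneg_left (hPx u ((hUxiff u).mp huUx).1) hα0
    calc ∑ u ∈ Ux \ Pr.image Prod.fst, r1 u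
        ≤ (Ux \ Pr.image Prod.fst).card • ((1 - α) * P) :=
          Finset.sum_le_card_nsmul _ _ _ hb'
      _ = ((Ux \ Pr.image Prod.fst).card : ℝ) * ((1 - α) * P) := by
          rw [nsmul_eq_mul]
      _ ≤ mm * ((1 - α) * P) :=
          mul_le_mul_of_nonneg_right hcard1 (mul_nonneg hα0 hPnn)
      _ = (1 - α) * P * mm := by ring
  have hunm2 : ∑ v ∈ Uy \ Pr.image Prod.snd, r2 v ≤ (1 - α) * P * mm := by
    have hb' : ∀ v ∈ Uy \ Pr.image Prod.snd, r2 v ≤ (1 - α) * P := by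
      intro v hv
      have hvUy : v ∈ Uy := (Finset.mem_sdiff.mp hv).1
      rw [hr2Uy v hvUy]
      exact mul_le_mul_of_nonneg_left (hPy v ((hUyiff v).mp hvUy).1) hα0
    calc ∑ v ∈ Uy \ Pr.image Prod.snd, r2 v
        ≤ (Uy \ Pr.image Prod.snd).card • ((1 - α) * P) :=
          Finset.sum_le_card_nsmul _ _ _ hb'
      _ = ((Uy \ Pr.image Prod.snd).card : ℝ) * ((1 - α) * P) := by
          rw [nsmul_eq_mul]
      _ ≤ mm * ((1 - α) * P) :=
          mul_le_mul_of_nonneg_right hcard2 (mul_nonneg hα0 hPnn)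
      _ = (1 - α) * P * mm := by ring
  have hρle : ρ ≤ (1 - α) * Dg + (1 - α) * P * mm := by
    rcases min_cases (r1 x - Ay) (r2 y - Ax) with ⟨heq, _⟩ | ⟨heq, _⟩
    · have hρeq : ρ = Ex - TT := by
        rw [hsum_r1'full, hr1sum, hhdef, heq]
        ring
      rw [hρeq, hEsplit1]
      linarith only [hpairsum1, hunm1]
    · have hρeq : ρ = Ey - TT := by
        rw [← hsum_r2', hsum_r2'full, hr2sum, hhdef, heq]
        ring
      rw [hρeq, hEsplit2]
      linarith only [hpairsum2, hunm2]
  have hmmnn : (0:ℝ) ≤ mm := by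
    rw [hmmdef]; positivity
  have hDgnn : (0:ℝ) ≤ Dg := by
    rw [hDgdef]
    exact div_nonneg (abs_nonneg _) (le_min hdx.le hdy.le)
  refine ⟨π, ⟨hπnn, hmarg1, hmarg2⟩, ?_⟩
  have h2 : cost G π ≤ 1 - (1 - α) * Ov G W x y + 2 * ρ := by
    linarith only [hcost, hbalance]
  have h3 : 2 * ρ ≤ 3 * (1 - α) * (P * mm + 2 * Dg) := by
    have k1 : 0 ≤ (1 - α) * (P * mm) := mul_nonneg hα0 (mul_nonneg hPnn hmmnn)
    have k2 : 0 ≤ (1 - α) * Dg := mul_nonneg hα0 hDgnn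
    linarith only [hρle, k1, k2]
  linarith only [h2, h3]


end WeightedCurv
end
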